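/- arXiv:2110.04365 — 5 statements merged into one kernel-verified Lean document; each statement's English description precedes it below -/
import Mathlib

section
/- Let U₁, U₂, U₃, V₁₂, V₁₃ be mutually independent random variables, where U₁, U₂, U₃ take values in a measurable space S and V₁₂, V₁₃ take values in a measurable space T, and let τ : S × S × T → ℝ be measurable. Set Z₁₂ := τ(U₁, U₂, V₁₂) and Z₁₃ := τ(U₁, U₃, V₁₃), and assume both are square-integrable. Then E[Z₁₂ · Z₁₃] = E[ E[Z₁₂ | σ(U₁)] · E[Z₁₃ | σ(U₁)] ]. In particular, if E[Z₁₂] = E[Z₁₃] = 0, then Cov(Z₁₂, Z₁₃) = Cov(E[Z₁₂ | σ(U₁)], E[Z₁₃ | σ(U₁)]). -/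
open MeasureTheory ProbabilityTheory

/-!
With `X = U₁`, `Y = (U₂, V₁₂)` and `Y' = (U₃, V₁₃)`, the independence of the five shocks makes
`X`, `Y`, `Y'` mutually independent, so the joint law of `(X, Y, Y')` is a product measure.
By Fubini, `E[τ(X, Y) | X] = g(X)` with `g x = E τ(x, Y)`, similarly `E[τ(X, Y') | X] = h(X)`, and
`E[τ(X, Y) τ(X, Y')] = ∫ (∫ τ(x, ·) dP_Y) (∫ τ(x, ·) dP_Y') dP_X(x) = E[g(X) h(X)]`.
The covariance identity follows because conditioning preserves means.
-/

namespace ProbabilityTheory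

lemma iIndep.indepFun_of_measurable_biSup {Ω ι β γ : Type*} {mΩ : MeasurableSpace Ω}
    [MeasurableSpace β] [MeasurableSpace γ] {P : Measure Ω} {m : ι → MeasurableSpace Ω}
    (h_le : ∀ i, m i ≤ mΩ) (h_indep : iIndep m P) {A B : Set ι} (hAB : Disjoint A B)
    {f : Ω → β} {g : Ω → γ} (hf : Measurable[⨆ i ∈ A, m i] f) (hg : Measurable[⨆ i ∈ B, m i] g) :
    IndepFun f g P :=
  (IndepFun_iff_Indep f g P).2 <| indep_of_indep_of_le_right
    (indep_of_indep_of_le_left (indep_iSup_of_disjoint h_le h_indep hAB) hf.comap_le) hg.comap_le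

section IntegratingOut

variable {Ω S B B' E : Type*} {mΩ : MeasurableSpace Ω} [MeasurableSpace S] [MeasurableSpace B]
  [MeasurableSpace B'] {P : Measure Ω} [IsProbabilityMeasure P] {X : Ω → S} {Y : Ω → B}
  {Y' : Ω → B'}

lemma IndepFun.condExp_comp_prodMk_ae_eq_integral [NormedAddCommGroup E] [NormedSpace ℝ E]
    [CompleteSpace E] (hX : Measurable X) (hY : Measurable Y) (hXY : IndepFun X Y P)
    {F : S × B → E} (hF : StronglyMeasurable F) (hint : Integrable (fun ω => F (X ω, Y ω)) P) :
    P[fun ω => F (X ω, Y ω) | MeasurableSpace.comap X inferInstance]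
      =ᵐ[P] fun ω => ∫ y, F (X ω, y) ∂(P.map Y) := by
  have : IsProbabilityMeasure (P.map Y) := Measure.isProbabilityMeasure_map hY.aemeasurable
  have hmap : P.map (fun ω => (X ω, Y ω)) = (P.map X).prod (P.map Y) :=
    (indepFun_iff_map_prod_eq_prod_map_map hX.aemeasurable hY.aemeasurable).mp hXY
  have hF_int : Integrable F ((P.map X).prod (P.map Y)) := by
    rw [← hmap]
    exact (integrable_map_measure hF.aestronglyMeasurable (hX.prodMk hY).aemeasurable).mpr hint
  have hg : StronglyMeasurable fun x => ∫ y, F (x, y) ∂(P.map Y) := hF.integral_prod_right'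
  refine (ae_eq_condExp_of_forall_setIntegral_eq hX.comap_le hint
    (fun s _ _ => ?_) ?_ (hg.comp_measurable (comap_measurable X)).aestronglyMeasurable).symm
  · exact ((integrable_map_measure hg.aestronglyMeasurable hX.aemeasurable).mp
      hF_int.integral_prod_left).integrableOn
  rintro _ ⟨A, hA, rfl⟩ -
  calc ∫ ω in X ⁻¹' A, ∫ y, F (X ω, y) ∂(P.map Y) ∂P
      = ∫ x in A, ∫ y, F (x, y) ∂(P.map Y) ∂(P.map X) :=
        (setIntegral_map hA hg.aestronglyMeasurable hX.aemeasurable).symm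
    _ = ∫ p in A ×ˢ Set.univ, F p ∂((P.map X).prod (P.map Y)) := by
        rw [setIntegral_prod _ hF_int.integrableOn, Measure.restrict_univ]
    _ = ∫ ω in X ⁻¹' A, F (X ω, Y ω) ∂P := by
        rw [← hmap, setIntegral_map (hA.prod MeasurableSet.univ) hF.aestronglyMeasurable
          (hX.prodMk hY).aemeasurable, Set.mk_preimage_prod, Set.preimage_univ, Set.inter_univ]

lemma IndepFun.integral_mul_comp_prodMk {L : Type*} [RCLike L] (hX : Measurable X)
    (hY : Measurable Y) (hY' : Measurable Y')
    (hXYY' : IndepFun X (fun ω => (Y ω, Y' ω)) P) (hYY' : IndepFun Y Y' P)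
    {F : S × B → L} {G : S × B' → L} (hF : Measurable F) (hG : Measurable G)
    (hint : Integrable (fun ω => F (X ω, Y ω) * G (X ω, Y' ω)) P) :
    ∫ ω, F (X ω, Y ω) * G (X ω, Y' ω) ∂P
      = ∫ ω, (∫ y, F (X ω, y) ∂(P.map Y)) * (∫ y', G (X ω, y') ∂(P.map Y')) ∂P := by
  have : IsProbabilityMeasure (P.map Y) := Measure.isProbabilityMeasure_map hY.aemeasurable
  have : IsProbabilityMeasure (P.map Y') := Measure.isProbabilityMeasure_map hY'.aemeasurable
  have hmap : P.map (fun ω => (X ω, (Y ω, Y' ω)))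
      = (P.map X).prod ((P.map Y).prod (P.map Y')) := by
    rw [← (indepFun_iff_map_prod_eq_prod_map_map hY.aemeasurable hY'.aemeasurable).mp hYY']
    exact (indepFun_iff_map_prod_eq_prod_map_map hX.aemeasurable
      (hY.prodMk hY').aemeasurable).mp hXYY'
  set Φ : S × B × B' → L := fun p => F (p.1, p.2.1) * G (p.1, p.2.2)
  have hΦ : Measurable Φ := by fun_prop
  have hXYY'_meas : Measurable fun ω => (X ω, (Y ω, Y' ω)) := hX.prodMk (hY.prodMk hY')
  have hΦ_int : Integrable Φ ((P.map X).prod ((P.map Y).prod (P.map Y'))) := by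
    rw [← hmap]
    exact (integrable_map_measure hΦ.aestronglyMeasurable hXYY'_meas.aemeasurable).mpr hint
  have hgh : StronglyMeasurable fun x =>
      (∫ y, F (x, y) ∂(P.map Y)) * (∫ y', G (x, y') ∂(P.map Y')) :=
    hF.stronglyMeasurable.integral_prod_right'.mul hG.stronglyMeasurable.integral_prod_right'
  calc ∫ ω, F (X ω, Y ω) * G (X ω, Y' ω) ∂P
      = ∫ p, Φ p ∂((P.map X).prod ((P.map Y).prod (P.map Y'))) := by
        rw [← hmap, integral_map hXYY'_meas.aemeasurable hΦ.aestronglyMeasurable]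
    _ = ∫ x, ∫ w, Φ (x, w) ∂((P.map Y).prod (P.map Y')) ∂(P.map X) := integral_prod Φ hΦ_int
    _ = ∫ x, (∫ y, F (x, y) ∂(P.map Y)) * (∫ y', G (x, y') ∂(P.map Y')) ∂(P.map X) := by
        congr 1 with x
        exact integral_prod_mul (fun y => F (x, y)) (fun y' => G (x, y'))
    _ = _ := integral_map hX.aemeasurable hgh.aestronglyMeasurable

end IntegratingOut

end ProbabilityTheory

lemma indepFun_shared_node_of_iIndep {Ω S₁ S₂ S₃ T₂ T₃ : Type*} [MeasurableSpace Ω]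
    [MeasurableSpace S₁] [MeasurableSpace S₂] [MeasurableSpace S₃] [MeasurableSpace T₂]
    [MeasurableSpace T₃] {P : Measure Ω} {U₁ : Ω → S₁} {U₂ : Ω → S₂} {U₃ : Ω → S₃}
    {V₁₂ : Ω → T₂} {V₁₃ : Ω → T₃} (hU₁ : Measurable U₁) (hU₂ : Measurable U₂)
    (hU₃ : Measurable U₃) (hV₁₂ : Measurable V₁₂) (hV₁₃ : Measurable V₁₃)
    (hindep : iIndep
      ![MeasurableSpace.comap U₁ inferInstance, MeasurableSpace.comap U₂ inferInstance,
        MeasurableSpace.comap U₃ inferInstance, MeasurableSpace.comap V₁₂ inferInstance,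
        MeasurableSpace.comap V₁₃ inferInstance] P) :
    IndepFun U₁ (fun ω => ((U₂ ω, V₁₂ ω), (U₃ ω, V₁₃ ω))) P ∧
      IndepFun (fun ω => (U₂ ω, V₁₂ ω)) (fun ω => (U₃ ω, V₁₃ ω)) P := by
  set m := ![MeasurableSpace.comap U₁ inferInstance, MeasurableSpace.comap U₂ inferInstance,
    MeasurableSpace.comap U₃ inferInstance, MeasurableSpace.comap V₁₂ inferInstance,
    MeasurableSpace.comap V₁₃ inferInstance]
  have h_le : ∀ i, m i ≤ ‹MeasurableSpace Ω› := by
    intro i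
    fin_cases i
    exacts [hU₁.comap_le, hU₂.comap_le, hU₃.comap_le, hV₁₂.comap_le, hV₁₃.comap_le]
  have hU₁' {A : Set (Fin 5)} (h : 0 ∈ A) : Measurable[⨆ j ∈ A, m j] U₁ :=
    (comap_measurable U₁).mono (le_biSup m h) le_rfl
  have hU₂' {A : Set (Fin 5)} (h : 1 ∈ A) : Measurable[⨆ j ∈ A, m j] U₂ :=
    (comap_measurable U₂).mono (le_biSup m h) le_rfl
  have hU₃' {A : Set (Fin 5)} (h : 2 ∈ A) : Measurable[⨆ j ∈ A, m j] U₃ :=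
    (comap_measurable U₃).mono (le_biSup m h) le_rfl
  have hV₁₂' {A : Set (Fin 5)} (h : 3 ∈ A) : Measurable[⨆ j ∈ A, m j] V₁₂ :=
    (comap_measurable V₁₂).mono (le_biSup m h) le_rfl
  have hV₁₃' {A : Set (Fin 5)} (h : 4 ∈ A) : Measurable[⨆ j ∈ A, m j] V₁₃ :=
    (comap_measurable V₁₃).mono (le_biSup m h) le_rfl
  exact ⟨hindep.indepFun_of_measurable_biSup h_le (A := {0}) (B := {1, 2, 3, 4}) (by simp)
      (hU₁' (by simp))
      (((hU₂' (by simp)).prodMk (hV₁₂' (by simp))).prodMk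
        ((hU₃' (by simp)).prodMk (hV₁₃' (by simp)))),
    hindep.indepFun_of_measurable_biSup h_le (A := {1, 3}) (B := {2, 4}) (by simp)
      ((hU₂' (by simp)).prodMk (hV₁₂' (by simp))) ((hU₃' (by simp)).prodMk (hV₁₃' (by simp)))⟩

/-- For two dyadic entries sharing exactly one node shock under the AHK structure,
the expectation of the product equals the expectation of the product of the
conditional expectations given the shared shock; in particular the covariances agree. -/
theorem dyadic_shared_node_conditional_covariance
    {Ω S T : Type*} [MeasurableSpace Ω] [MeasurableSpace S] [MeasurableSpace T]
    (P : Measure Ω) [IsProbabilityMeasure P]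
    (U₁ U₂ U₃ : Ω → S) (V₁₂ V₁₃ : Ω → T)
    (hU₁ : Measurable U₁) (hU₂ : Measurable U₂) (hU₃ : Measurable U₃)
    (hV₁₂ : Measurable V₁₂) (hV₁₃ : Measurable V₁₃)
    (hindep : iIndep
      (![MeasurableSpace.comap U₁ inferInstance,
         MeasurableSpace.comap U₂ inferInstance,
         MeasurableSpace.comap U₃ inferInstance,
         MeasurableSpace.comap V₁₂ inferInstance,
         MeasurableSpace.comap V₁₃ inferInstance]) P)
    (τ : S → S → T → ℝ)
    (hτ : Measurable fun q : S × S × T => τ q.1 q.2.1 q.2.2)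
    (Z₁₂ Z₁₃ : Ω → ℝ)
    (hZ₁₂ : Z₁₂ = fun ω => τ (U₁ ω) (U₂ ω) (V₁₂ ω))
    (hZ₁₃ : Z₁₃ = fun ω => τ (U₁ ω) (U₃ ω) (V₁₃ ω))
    (hL₁₂ : MemLp Z₁₂ 2 P) (hL₁₃ : MemLp Z₁₃ 2 P) :
    (∫ ω, Z₁₂ ω * Z₁₃ ω ∂P
      = ∫ ω, (P[Z₁₂ | MeasurableSpace.comap U₁ inferInstance]) ω *
             (P[Z₁₃ | MeasurableSpace.comap U₁ inferInstance]) ω ∂P)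
    ∧ ((∫ ω, Z₁₂ ω ∂P) = 0 → (∫ ω, Z₁₃ ω ∂P) = 0 →
        (∫ ω, Z₁₂ ω * Z₁₃ ω ∂P) - (∫ ω, Z₁₂ ω ∂P) * (∫ ω, Z₁₃ ω ∂P)
          = (∫ ω, (P[Z₁₂ | MeasurableSpace.comap U₁ inferInstance]) ω *
                  (P[Z₁₃ | MeasurableSpace.comap U₁ inferInstance]) ω ∂P)
            - (∫ ω, (P[Z₁₂ | MeasurableSpace.comap U₁ inferInstance]) ω ∂P) *
              (∫ ω, (P[Z₁₃ | MeasurableSpace.comap U₁ inferInstance]) ω ∂P)) := by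
  obtain ⟨h_node, h_edges⟩ := indepFun_shared_node_of_iIndep hU₁ hU₂ hU₃ hV₁₂ hV₁₃ hindep
  have h_prod : ∫ ω, Z₁₂ ω * Z₁₃ ω ∂P
      = ∫ ω, (P[Z₁₂ | MeasurableSpace.comap U₁ inferInstance]) ω *
          (P[Z₁₃ | MeasurableSpace.comap U₁ inferInstance]) ω ∂P := by
    subst hZ₁₂ hZ₁₃
    have hE₁₂ := (h_node.comp measurable_id measurable_fst).condExp_comp_prodMk_ae_eq_integral
      hU₁ (hU₂.prodMk hV₁₂) hτ.stronglyMeasurable (hL₁₂.integrable one_le_two)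
    have hE₁₃ := (h_node.comp measurable_id measurable_snd).condExp_comp_prodMk_ae_eq_integral
      hU₁ (hU₃.prodMk hV₁₃) hτ.stronglyMeasurable (hL₁₃.integrable one_le_two)
    exact (h_node.integral_mul_comp_prodMk hU₁ (hU₂.prodMk hV₁₂) (hU₃.prodMk hV₁₃) h_edges hτ hτ
      (hL₁₂.integrable_mul hL₁₃)).trans (integral_congr_ae (hE₁₂.mul hE₁₃)).symm
  refine ⟨h_prod, fun h₁₂ h₁₃ => ?_⟩
  rw [integral_condExp hU₁.comap_le, integral_condExp hU₁.comap_le, h₁₂, h₁₃, h_prod]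
end

section
/- In the AHK setup on n ≥ 3 nodes, assume that E[Z₁₂] = 0 and E[Z₁₂²] < ∞. Then Var( Σ_{(i,j): i≠j} Z_{ij} ) = n(n−1)(n−2)·( E[Z₁₂Z₁₃] + E[Z₁₂Z₃₁] + E[Z₂₁Z₁₃] + E[Z₂₁Z₃₁] ) + n(n−1)·( E[Z₁₂²] + E[Z₁₂Z₂₁] ). -/
/-!
Expanding the variance of the sum gives the sum of `E[Z_p Z_q]` over all pairs of ordered pairs
`p, q`. Relabelling the vertices by an injective map does not change the joint law of the `U`'s
and `V`'s, hence not the law of the array (joint exchangeability), so `E[Z_p Z_q]` depends only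
on how `p` and `q` overlap. Entries on vertex-disjoint pairs are functions of disjoint sets of
independent variables, hence uncorrelated. Counting the pairs `(p, q)` of each overlap type gives
the coefficients `n(n-1)` and `n(n-1)(n-2)`.
-/

open MeasureTheory ProbabilityTheory Finset

theorem ProbabilityTheory.iIndep.indepFun_of_measurable_iSup {Ω ι β γ : Type*}
    {mΩ : MeasurableSpace Ω} {P : Measure Ω} [MeasurableSpace β] [MeasurableSpace γ]
    {m : ι → MeasurableSpace Ω} (h_le : ∀ i, m i ≤ mΩ) (h : iIndep m P) {A B : Set ι}
    (hAB : Disjoint A B) {f : Ω → β} {g : Ω → γ}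
    (hf : Measurable[⨆ i ∈ A, m i] f) (hg : Measurable[⨆ i ∈ B, m i] g) :
    IndepFun f g P :=
  (IndepFun_iff_Indep f g P).2 <| indep_of_indep_of_le_right
    (indep_of_indep_of_le_left (indep_iSup_of_disjoint h_le h hAB) hf.comap_le) hg.comap_le

theorem ProbabilityTheory.variance_fun_sum_sum {Ω ι κ : Type*} {mΩ : MeasurableSpace Ω}
    {P : Measure Ω} [IsFiniteMeasure P] [Fintype ι] [Fintype κ] {X : ι → κ → Ω → ℝ}
    (hX : ∀ i j, MemLp (X i j) 2 P) :
    Var[fun ω => ∑ i, ∑ j, X i j ω; P] = ∑ i, ∑ j, ∑ k, ∑ l, cov[X i j, X k l; P] := by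
  rw [variance_fun_sum (X := fun i ω => ∑ j, X i j ω)
    fun i => memLp_finsetSum _ fun j _ => hX i j]
  refine sum_congr rfl fun i _ => ?_
  rw [sum_congr rfl fun k _ => covariance_fun_sum_fun_sum (hX i) (hX k), sum_comm]

theorem ProbabilityTheory.covariance_eq_integral_mul {Ω : Type*} {mΩ : MeasurableSpace Ω}
    {P : Measure Ω} {X Y : Ω → ℝ} (hX : ∫ ω, X ω ∂P = 0) (hY : ∫ ω, Y ω ∂P = 0) :
    cov[X, Y; P] = ∫ ω, X ω * Y ω ∂P := by
  simp [covariance, hX, hY]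

section Counting

variable {α : Type*} [Fintype α] [DecidableEq α]

theorem Fintype.sum_eq_add_add_sum_compl_pair {M : Type*} [AddCommMonoid M] {i j : α}
    (hij : i ≠ j) (f : α → M) : ∑ k, f k = f i + f j + ∑ k ∈ {i, j}ᶜ, f k := by
  rw [← sum_pair hij, sum_add_sum_compl]

theorem Finset.sum_compl_pair_const {i j : α} (hij : i ≠ j) (c : ℝ) :
    ∑ _k ∈ ({i, j}ᶜ : Finset α), c = (Fintype.card α - 2) * c := by
  have h2 : 2 ≤ Fintype.card α := card_pair hij ▸ card_le_univ _
  rw [sum_const, card_compl, card_pair hij, nsmul_eq_mul, Nat.cast_sub h2, Nat.cast_ofNat]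

theorem Finset.sum_compl_singleton_const (i : α) (c : ℝ) :
    ∑ _k ∈ ({i}ᶜ : Finset α), c = (Fintype.card α - 1) * c := by
  rw [sum_const, card_compl, card_singleton, nsmul_eq_mul,
    Nat.cast_sub (Fintype.card_pos_iff.2 ⟨i⟩), Nat.cast_one]

theorem sum_sum_sum_sum_eq_of_overlap_pattern (c : α → α → α → α → ℝ)
    {A B C₁ C₂ C₃ C₄ : ℝ}
    (hdiag_left : ∀ i k l, c i i k l = 0) (hdiag_right : ∀ i j k, c i j k k = 0)
    (hA : ∀ i j, i ≠ j → c i j i j = A) (hB : ∀ i j, i ≠ j → c i j j i = B)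
    (hC₁ : ∀ i j k, i ≠ j → k ≠ i → k ≠ j → c i j i k = C₁)
    (hC₂ : ∀ i j k, i ≠ j → k ≠ i → k ≠ j → c i j k i = C₂)
    (hC₃ : ∀ i j k, i ≠ j → k ≠ i → k ≠ j → c i j j k = C₃)
    (hC₄ : ∀ i j k, i ≠ j → k ≠ i → k ≠ j → c i j k j = C₄)
    (hD : ∀ i j k l, i ≠ j → k ≠ l → k ≠ i → k ≠ j → l ≠ i → l ≠ j → c i j k l = 0) :
    ∑ i, ∑ j, ∑ k, ∑ l, c i j k l = Fintype.card α * (Fintype.card α - 1) *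
      ((Fintype.card α - 2) * (C₁ + C₂ + C₃ + C₄) + A + B) := by
  have row : ∀ i j, i ≠ j → ∑ k, ∑ l, c i j k l =
      (Fintype.card α - 2) * (C₁ + C₂ + C₃ + C₄) + A + B := by
    intro i j hij
    have compl_ne {k : α} (hk : k ∈ ({i, j}ᶜ : Finset α)) : k ≠ i ∧ k ≠ j := by
      simpa [not_or] using hk
    have first : ∑ l, c i j i l = A + (Fintype.card α - 2) * C₁ := by
      rw [Fintype.sum_eq_add_add_sum_compl_pair hij, hdiag_right, hA i j hij,
        sum_congr rfl fun l hl => hC₁ i j l hij (compl_ne hl).1 (compl_ne hl).2,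
        sum_compl_pair_const hij]
      ring
    have second : ∑ l, c i j j l = B + (Fintype.card α - 2) * C₃ := by
      rw [Fintype.sum_eq_add_add_sum_compl_pair hij, hdiag_right, hB i j hij,
        sum_congr rfl fun l hl => hC₃ i j l hij (compl_ne hl).1 (compl_ne hl).2,
        sum_compl_pair_const hij]
      ring
    have rest : ∀ k ∈ ({i, j}ᶜ : Finset α), ∑ l, c i j k l = C₂ + C₄ := by
      intro k hk
      obtain ⟨hki, hkj⟩ := compl_ne hk
      have vanish : ∑ l ∈ ({i, j}ᶜ : Finset α), c i j k l = 0 := by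
        refine sum_eq_zero fun l hl => ?_
        obtain rfl | hkl := eq_or_ne k l
        · exact hdiag_right i j k
        · exact hD i j k l hij hkl hki hkj (compl_ne hl).1 (compl_ne hl).2
      rw [Fintype.sum_eq_add_add_sum_compl_pair hij, hC₂ i j k hij hki hkj, hC₄ i j k hij hki hkj,
        vanish, add_zero]
    rw [Fintype.sum_eq_add_add_sum_compl_pair hij, first, second, sum_congr rfl rest,
      sum_compl_pair_const hij]
    ring
  have column : ∀ i, ∑ j, ∑ k, ∑ l, c i j k l =
      (Fintype.card α - 1) * ((Fintype.card α - 2) * (C₁ + C₂ + C₃ + C₄) + A + B) := by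
    intro i
    rw [Fintype.sum_eq_add_sum_compl i,
      sum_congr rfl fun j hj => row i j (Ne.symm (by simpa using hj)),
      sum_compl_singleton_const]
    simp [hdiag_left]
  rw [sum_congr rfl fun i _ => column i, sum_const, card_univ, nsmul_eq_mul]
  ring

end Counting

section IndepIIDFamilies

variable {Ω ι κ S T : Type*} {mΩ : MeasurableSpace Ω} [MeasurableSpace S] [MeasurableSpace T]
  {P : Measure Ω} {U : ι → Ω → S} {V : κ → Ω → T}

variable (U V) in
abbrev sumComap : ι ⊕ κ → MeasurableSpace Ω :=
  Sum.elim (fun i => MeasurableSpace.comap (U i) inferInstance)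
    (fun e => MeasurableSpace.comap (V e) inferInstance)

variable (P U V) in
structure IndepIIDFamilies : Prop where
  measurable_left : ∀ i, Measurable (U i)
  measurable_right : ∀ e, Measurable (V e)
  identDistrib_left : ∀ i j, IdentDistrib (U i) (U j) P P
  identDistrib_right : ∀ e e', IdentDistrib (V e) (V e') P P
  iIndep : iIndep (sumComap U V) P

theorem measurable_iSup_sumComap_inl {A : Set (ι ⊕ κ)} {i : ι} (hi : .inl i ∈ A) :
    Measurable[⨆ x ∈ A, sumComap U V x] (U i) :=
  (comap_measurable (U i)).mono (le_iSup₂ (f := fun x (_ : x ∈ A) => sumComap U V x) _ hi) le_rfl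

theorem measurable_iSup_sumComap_inr {A : Set (ι ⊕ κ)} {e : κ} (he : .inr e ∈ A) :
    Measurable[⨆ x ∈ A, sumComap U V x] (V e) :=
  (comap_measurable (V e)).mono (le_iSup₂ (f := fun x (_ : x ∈ A) => sumComap U V x) _ he) le_rfl

namespace IndepIIDFamilies

theorem iIndepFun_left (h : IndepIIDFamilies P U V) : iIndepFun U P :=
  h.iIndep.precomp Sum.inl_injective

theorem iIndepFun_right (h : IndepIIDFamilies P U V) : iIndepFun V P :=
  h.iIndep.precomp Sum.inr_injective

theorem indepFun_of_measurable_iSup (h : IndepIIDFamilies P U V) {A B : Set (ι ⊕ κ)}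
    (hAB : Disjoint A B) {β γ : Type*} [MeasurableSpace β] [MeasurableSpace γ]
    {f : Ω → β} {g : Ω → γ} (hf : Measurable[⨆ x ∈ A, sumComap U V x] f)
    (hg : Measurable[⨆ x ∈ B, sumComap U V x] g) :
    IndepFun f g P := by
  refine h.iIndep.indepFun_of_measurable_iSup (fun x => ?_) hAB hf hg
  cases x with
  | inl i => exact (h.measurable_left i).comap_le
  | inr e => exact (h.measurable_right e).comap_le

theorem identDistrib_reindex [IsProbabilityMeasure P] (h : IndepIIDFamilies P U V)
    {ι' κ' : Type*} [Countable ι'] [Countable κ'] {a a' : ι' → ι} {e e' : κ' → κ}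
    (ha : a.Injective) (ha' : a'.Injective) (he : e.Injective) (he' : e'.Injective) :
    IdentDistrib (fun ω => (fun k => U (a k) ω, fun m => V (e m) ω))
      (fun ω => (fun k => U (a' k) ω, fun m => V (e' m) ω)) P P := by
  have indep (a : ι' → ι) (e : κ' → κ) :
      IndepFun (fun ω k => U (a k) ω) (fun ω m => V (e m) ω) P :=
    h.indepFun_of_measurable_iSup Set.isCompl_range_inl_range_inr.disjoint
      (@measurable_pi_lambda _ _ _ (⨆ x ∈ Set.range Sum.inl, sumComap U V x) _ _
        fun k => measurable_iSup_sumComap_inl ⟨a k, rfl⟩)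
      (@measurable_pi_lambda _ _ _ (⨆ x ∈ Set.range Sum.inr, sumComap U V x) _ _
        fun m => measurable_iSup_sumComap_inr ⟨e m, rfl⟩)
  exact IdentDistrib.prodMk
    (.pi (fun k => h.identDistrib_left _ _) (h.iIndepFun_left.precomp ha)
      (h.iIndepFun_left.precomp ha'))
    (.pi (fun m => h.identDistrib_right _ _) (h.iIndepFun_right.precomp he)
      (h.iIndepFun_right.precomp he'))
    (indep a e) (indep a' e')

end IndepIIDFamilies

end IndepIIDFamilies

section Edges

variable {α β : Type*}

def edge {i j : α} (h : i ≠ j) : {e : Sym2 α // ¬ e.IsDiag} :=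
  ⟨s(i, j), mt Sym2.mk_isDiag_iff.mp h⟩

def edgeMap {f : α → β} (hf : f.Injective) (e : {e : Sym2 α // ¬ e.IsDiag}) :
    {e : Sym2 β // ¬ e.IsDiag} :=
  ⟨e.1.map f, (Sym2.isDiag_map hf).not.2 e.2⟩

theorem edgeMap_injective {f : α → β} (hf : f.Injective) : (edgeMap hf).Injective :=
  fun _ _ h => Subtype.ext (Sym2.map.injective hf (congrArg Subtype.val h))

theorem edgeMap_edge {f : α → β} (hf : f.Injective) {i j : α} (h : i ≠ j) :
    edgeMap hf (edge h) = edge (hf.ne h) :=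
  Subtype.ext (Sym2.map_mk f i j)

theorem edge_ne_edge {i j k l : α} (hij : i ≠ j) (hkl : k ≠ l) (hki : k ≠ i) (hkj : k ≠ j) :
    edge hij ≠ edge hkl := by
  intro h
  have := congrArg Subtype.val h
  simp only [edge, Sym2.eq_iff] at this
  rcases this with ⟨rfl, -⟩ | ⟨-, rfl⟩ <;> simp_all

end Edges

section AHKArray

variable {Ω α S T : Type*} {mΩ : MeasurableSpace Ω} {mS : MeasurableSpace S}
  {mT : MeasurableSpace T} [DecidableEq α] {P : Measure Ω} {τ : S → S → T → ℝ}
  {U : α → Ω → S} {V : {e : Sym2 α // ¬ e.IsDiag} → Ω → T}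

/-- Diagonal entries are `0`, matching the `if i ≠ j` in the sum. -/
def ahkArray (τ : S → S → T → ℝ) (U : α → Ω → S) (V : {e : Sym2 α // ¬ e.IsDiag} → Ω → T)
    (i j : α) (ω : Ω) : ℝ :=
  if h : i = j then 0 else τ (U i ω) (U j ω) (V (edge h) ω)

theorem ahkArray_self (i : α) : ahkArray τ U V i i = 0 := by
  funext ω
  simp [ahkArray]

theorem ahkArray_of_ne {i j : α} (h : i ≠ j) :
    ahkArray τ U V i j = fun ω => τ (U i ω) (U j ω) (V (edge h) ω) := by
  funext ω
  simp [ahkArray, h]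

theorem ahkArray_comp {f : α → α} (hf : f.Injective) (i j : α) :
    ahkArray τ (fun k => U (f k)) (fun e => V (edgeMap hf e)) i j
      = ahkArray τ U V (f i) (f j) := by
  funext ω
  by_cases h : i = j
  · simp [ahkArray, h]
  · simp only [ahkArray, h, hf.ne h, dite_false, edgeMap_edge]

theorem measurable_ahkArray (hτ : Measurable fun q : S × S × T => τ q.1 q.2.1 q.2.2)
    (hU : ∀ i, Measurable (U i)) (hV : ∀ e, Measurable (V e)) (i j : α) :
    Measurable (ahkArray τ U V i j) := by
  by_cases h : i = j
  · rw [h, ahkArray_self]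
    exact measurable_const
  · rw [ahkArray_of_ne h]
    exact hτ.comp ((hU i).prodMk ((hU j).prodMk (hV _)))

theorem identDistrib_ahkArray_comp [IsProbabilityMeasure P] [Countable α]
    (hF : IndepIIDFamilies P U V) (hτ : Measurable fun q : S × S × T => τ q.1 q.2.1 q.2.2)
    {f : α → α} (hf : f.Injective) :
    IdentDistrib (fun ω (p : α × α) => ahkArray τ U V (f p.1) (f p.2) ω)
      (fun ω (p : α × α) => ahkArray τ U V p.1 p.2 ω) P P := by
  -- `ahkArray` at the coordinate projections is the array as a function of the pair `(U, V)`
  have hΦ : Measurable fun (x : (α → S) × ({e : Sym2 α // ¬ e.IsDiag} → T)) (p : α × α) =>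
      ahkArray τ (fun k x => x.1 k) (fun e x => x.2 e) p.1 p.2 x :=
    measurable_pi_lambda _ fun p => measurable_ahkArray hτ
      (fun k => (measurable_pi_apply k).comp measurable_fst)
      (fun e => (measurable_pi_apply e).comp measurable_snd) p.1 p.2
  have := (hF.identDistrib_reindex hf Function.injective_id (edgeMap_injective hf)
    Function.injective_id).comp hΦ
  convert this using 1
  · funext ω p
    rw [← ahkArray_comp hf]
    rfl
  · rfl

theorem identDistrib_ahkArray [IsProbabilityMeasure P] [Countable α]
    (hF : IndepIIDFamilies P U V) (hτ : Measurable fun q : S × S × T => τ q.1 q.2.1 q.2.2)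
    {i j i' j' : α} (h : i ≠ j) (h' : i' ≠ j') :
    IdentDistrib (ahkArray τ U V i j) (ahkArray τ U V i' j') P P := by
  obtain ⟨σ, hσ⟩ := Equiv.Perm.exists_extending_pair ![i', j'] ![i, j]
    (by simpa using h') (by simpa using h)
  have hσi : σ i' = i := hσ 0
  have hσj : σ j' = j := hσ 1
  rw [← hσi, ← hσj]
  exact (identDistrib_ahkArray_comp hF hτ σ.injective).comp (measurable_pi_apply (i', j'))

theorem integral_ahkArray_mul_eq [IsProbabilityMeasure P] [Countable α]
    (hF : IndepIIDFamilies P U V) (hτ : Measurable fun q : S × S × T => τ q.1 q.2.1 q.2.2)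
    {m : ℕ} {a b : Fin m → α} (ha : a.Injective) (hb : b.Injective) (p q r s : Fin m) :
    ∫ ω, ahkArray τ U V (a p) (a q) ω * ahkArray τ U V (a r) (a s) ω ∂P
      = ∫ ω, ahkArray τ U V (b p) (b q) ω * ahkArray τ U V (b r) (b s) ω ∂P := by
  obtain ⟨σ, hσ⟩ := Equiv.Perm.exists_extending_pair b a hb ha
  simp only [← hσ]
  exact ((identDistrib_ahkArray_comp hF hτ σ.injective).comp
    ((measurable_pi_apply (b p, b q)).mul (measurable_pi_apply (b r, b s)))).integral_eq

theorem indepFun_ahkArray (hF : IndepIIDFamilies P U V)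
    (hτ : Measurable fun q : S × S × T => τ q.1 q.2.1 q.2.2) {i j k l : α}
    (hij : i ≠ j) (hkl : k ≠ l) (hki : k ≠ i) (hkj : k ≠ j) (hli : l ≠ i) (hlj : l ≠ j) :
    IndepFun (ahkArray τ U V i j) (ahkArray τ U V k l) P := by
  rw [ahkArray_of_ne hij, ahkArray_of_ne hkl]
  refine hF.indepFun_of_measurable_iSup
    (A := {.inl i, .inl j, .inr (edge hij)}) (B := {.inl k, .inl l, .inr (edge hkl)}) ?_
    (hτ.comp ((measurable_iSup_sumComap_inl (by simp)).prodMk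
      ((measurable_iSup_sumComap_inl (by simp)).prodMk
        (measurable_iSup_sumComap_inr (by simp)))))
    (hτ.comp ((measurable_iSup_sumComap_inl (by simp)).prodMk
      ((measurable_iSup_sumComap_inl (by simp)).prodMk
        (measurable_iSup_sumComap_inr (by simp)))))
  have := edge_ne_edge hij hkl hki hkj
  simp [Set.disjoint_left, hki.symm, hkj.symm, hli.symm, hlj.symm, this]

theorem memLp_ahkArray [IsProbabilityMeasure P] [Countable α] (hF : IndepIIDFamilies P U V)
    (hτ : Measurable fun q : S × S × T => τ q.1 q.2.1 q.2.2) {i₀ i₁ : α} (h₀₁ : i₀ ≠ i₁)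
    (hL2 : MemLp (ahkArray τ U V i₀ i₁) 2 P) (i j : α) : MemLp (ahkArray τ U V i j) 2 P := by
  obtain rfl | h := eq_or_ne i j
  · rw [ahkArray_self]
    exact memLp_const 0
  · exact (identDistrib_ahkArray hF hτ h h₀₁).memLp_iff.2 hL2

theorem integral_ahkArray_eq_zero [IsProbabilityMeasure P] [Countable α]
    (hF : IndepIIDFamilies P U V) (hτ : Measurable fun q : S × S × T => τ q.1 q.2.1 q.2.2)
    {i₀ i₁ : α} (h₀₁ : i₀ ≠ i₁) (hmean : ∫ ω, ahkArray τ U V i₀ i₁ ω ∂P = 0) (i j : α) :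
    ∫ ω, ahkArray τ U V i j ω ∂P = 0 := by
  obtain rfl | h := eq_or_ne i j
  · simp [ahkArray_self]
  · exact (identDistrib_ahkArray hF hτ h h₀₁).integral_eq.trans hmean

theorem integral_ahkArray_mul_eq_zero [IsProbabilityMeasure P] [Countable α]
    (hF : IndepIIDFamilies P U V) (hτ : Measurable fun q : S × S × T => τ q.1 q.2.1 q.2.2)
    {i₀ i₁ : α} (h₀₁ : i₀ ≠ i₁) (hmean : ∫ ω, ahkArray τ U V i₀ i₁ ω ∂P = 0) {i j k l : α}
    (hij : i ≠ j) (hkl : k ≠ l) (hki : k ≠ i) (hkj : k ≠ j) (hli : l ≠ i) (hlj : l ≠ j) :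
    ∫ ω, ahkArray τ U V i j ω * ahkArray τ U V k l ω ∂P = 0 := by
  have := (indepFun_ahkArray hF hτ hij hkl hki hkj hli hlj).integral_mul_eq_mul_integral
    (measurable_ahkArray hτ hF.measurable_left hF.measurable_right i j).aestronglyMeasurable
    (measurable_ahkArray hτ hF.measurable_left hF.measurable_right k l).aestronglyMeasurable
  simpa [integral_ahkArray_eq_zero hF hτ h₀₁ hmean] using this

theorem variance_sum_ahkArray [Fintype α] [IsProbabilityMeasure P]
    (hF : IndepIIDFamilies P U V) (hτ : Measurable fun q : S × S × T => τ q.1 q.2.1 q.2.2)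
    {i₀ i₁ i₂ : α} (h₀₁ : i₀ ≠ i₁) (h₀₂ : i₀ ≠ i₂) (h₁₂ : i₁ ≠ i₂)
    (hmean : ∫ ω, ahkArray τ U V i₀ i₁ ω ∂P = 0) (hL2 : MemLp (ahkArray τ U V i₀ i₁) 2 P) :
    Var[fun ω => ∑ i, ∑ j, ahkArray τ U V i j ω; P]
      = Fintype.card α * (Fintype.card α - 1) * (Fintype.card α - 2) *
          ((∫ ω, ahkArray τ U V i₀ i₁ ω * ahkArray τ U V i₀ i₂ ω ∂P)
            + (∫ ω, ahkArray τ U V i₀ i₁ ω * ahkArray τ U V i₂ i₀ ω ∂P)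
            + (∫ ω, ahkArray τ U V i₁ i₀ ω * ahkArray τ U V i₀ i₂ ω ∂P)
            + (∫ ω, ahkArray τ U V i₁ i₀ ω * ahkArray τ U V i₂ i₀ ω ∂P))
        + Fintype.card α * (Fintype.card α - 1) *
          ((∫ ω, ahkArray τ U V i₀ i₁ ω ^ 2 ∂P)
            + (∫ ω, ahkArray τ U V i₀ i₁ ω * ahkArray τ U V i₁ i₀ ω ∂P)) := by
  have mean := integral_ahkArray_eq_zero hF hτ h₀₁ hmean
  have inj₂ {a b : α} (hab : a ≠ b) : (![a, b]).Injective := by simpa using hab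
  have inj₃ {a b c : α} (hab : a ≠ b) (hac : a ≠ c) (hbc : b ≠ c) : (![a, b, c]).Injective := by
    simp [Function.Injective, Fin.forall_fin_succ, hab, hac, hbc, hab.symm, hac.symm, hbc.symm]
  rw [variance_fun_sum_sum (memLp_ahkArray hF hτ h₀₁ hL2)]
  simp only [covariance_eq_integral_mul (mean _ _) (mean _ _)]
  rw [sum_sum_sum_sum_eq_of_overlap_pattern
    (fun i j k l => ∫ ω, ahkArray τ U V i j ω * ahkArray τ U V k l ω ∂P)
    (A := ∫ ω, ahkArray τ U V i₀ i₁ ω * ahkArray τ U V i₀ i₁ ω ∂P)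
    (B := ∫ ω, ahkArray τ U V i₀ i₁ ω * ahkArray τ U V i₁ i₀ ω ∂P)
    (C₁ := ∫ ω, ahkArray τ U V i₀ i₁ ω * ahkArray τ U V i₀ i₂ ω ∂P)
    (C₂ := ∫ ω, ahkArray τ U V i₀ i₁ ω * ahkArray τ U V i₂ i₀ ω ∂P)
    (C₃ := ∫ ω, ahkArray τ U V i₁ i₀ ω * ahkArray τ U V i₀ i₂ ω ∂P)
    (C₄ := ∫ ω, ahkArray τ U V i₁ i₀ ω * ahkArray τ U V i₂ i₀ ω ∂P)
    (fun i k l => by simp [ahkArray_self]) (fun i j k => by simp [ahkArray_self])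
    (fun i j h => integral_ahkArray_mul_eq hF hτ (inj₂ h) (inj₂ h₀₁) 0 1 0 1)
    (fun i j h => integral_ahkArray_mul_eq hF hτ (inj₂ h) (inj₂ h₀₁) 0 1 1 0)
    (fun i j k h hi hj => integral_ahkArray_mul_eq hF hτ (inj₃ h hi.symm hj.symm)
      (inj₃ h₀₁ h₀₂ h₁₂) 0 1 0 2)
    (fun i j k h hi hj => integral_ahkArray_mul_eq hF hτ (inj₃ h hi.symm hj.symm)
      (inj₃ h₀₁ h₀₂ h₁₂) 0 1 2 0)
    (fun i j k h hi hj => integral_ahkArray_mul_eq hF hτ (inj₃ h.symm hj.symm hi.symm)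
      (inj₃ h₀₁ h₀₂ h₁₂) 1 0 0 2)
    (fun i j k h hi hj => integral_ahkArray_mul_eq hF hτ (inj₃ h.symm hj.symm hi.symm)
      (inj₃ h₀₁ h₀₂ h₁₂) 1 0 2 0)
    (fun i j k l => integral_ahkArray_mul_eq_zero hF hτ h₀₁ hmean)]
  simp only [sq]
  ring

end AHKArray

theorem dyadic_sum_variance_formula_general
    {Ω S T : Type*} [MeasurableSpace Ω] [MeasurableSpace S] [MeasurableSpace T]
    (P : Measure Ω) [IsProbabilityMeasure P]
    {n : ℕ}
    (U : Fin n → Ω → S)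
    (V : {e : Sym2 (Fin n) // ¬ e.IsDiag} → Ω → T)
    (hU : ∀ i, Measurable (U i)) (hV : ∀ e, Measurable (V e))
    (hUid : ∀ i j, IdentDistrib (U i) (U j) P P)
    (hVid : ∀ e e', IdentDistrib (V e) (V e') P P)
    (hindep : iIndep
      (Sum.elim (fun i => MeasurableSpace.comap (U i) inferInstance)
                (fun e => MeasurableSpace.comap (V e) inferInstance)
        : Fin n ⊕ {e : Sym2 (Fin n) // ¬ e.IsDiag} → MeasurableSpace Ω) P)
    (τ : S → S → T → ℝ)
    (hτ : Measurable fun q : S × S × T => τ q.1 q.2.1 q.2.2)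
    (Z : Fin n → Fin n → Ω → ℝ)
    (hZ : ∀ i j : Fin n, ∀ hij : i ≠ j,
      Z i j = fun ω => τ (U i ω) (U j ω)
        (V ⟨Sym2.mk i j, mt Sym2.mk_isDiag_iff.mp hij⟩ ω))
    (i0 i1 i2 : Fin n)
    (h0 : (i0 : ℕ) = 0) (h1 : (i1 : ℕ) = 1) (h2 : (i2 : ℕ) = 2)
    (hmean : ∫ ω, Z i0 i1 ω ∂P = 0)
    (hL2 : MemLp (Z i0 i1) 2 P) :
    variance (fun ω => ∑ i : Fin n, ∑ j : Fin n, if i ≠ j then Z i j ω else 0) P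
      = (n : ℝ) * ((n : ℝ) - 1) * ((n : ℝ) - 2) *
          ((∫ ω, Z i0 i1 ω * Z i0 i2 ω ∂P) + (∫ ω, Z i0 i1 ω * Z i2 i0 ω ∂P)
            + (∫ ω, Z i1 i0 ω * Z i0 i2 ω ∂P) + (∫ ω, Z i1 i0 ω * Z i2 i0 ω ∂P))
        + (n : ℝ) * ((n : ℝ) - 1) *
          ((∫ ω, (Z i0 i1 ω) ^ 2 ∂P) + (∫ ω, Z i0 i1 ω * Z i1 i0 ω ∂P)) := by
  have h01 : i0 ≠ i1 := by rintro rfl; omega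
  have h02 : i0 ≠ i2 := by rintro rfl; omega
  have h12 : i1 ≠ i2 := by rintro rfl; omega
  have hZX {i j : Fin n} (h : i ≠ j) : Z i j = ahkArray τ U V i j :=
    (hZ i j h).trans (ahkArray_of_ne h).symm
  have hsum : (fun ω => ∑ i : Fin n, ∑ j : Fin n, if i ≠ j then Z i j ω else 0)
      = fun ω => ∑ i, ∑ j, ahkArray τ U V i j ω := by
    funext ω
    refine Finset.sum_congr rfl fun i _ => Finset.sum_congr rfl fun j _ => ?_
    obtain rfl | h := eq_or_ne i j
    · simp [ahkArray_self]
    · rw [if_pos h, hZX h]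
  rw [hZX h01] at hmean hL2
  rw [hsum, hZX h01, hZX h01.symm, hZX h02, hZX h02.symm,
    variance_sum_ahkArray ⟨hU, hV, hUid, hVid, hindep⟩ hτ h01 h02 h12 hmean hL2,
    Fintype.card_fin]

/-- Exact variance formula for a sum of a mean-zero jointly exchangeable dissociated
dyadic array in Aldous–Hoover–Kallenberg (AHK) form. -/
theorem dyadic_sum_variance_formula
    {Ω S T : Type*} [MeasurableSpace Ω] [MeasurableSpace S] [MeasurableSpace T]
    (P : Measure Ω) [IsProbabilityMeasure P]
    {n : ℕ} (hn : 3 ≤ n)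
    (U : Fin n → Ω → S)
    (V : {e : Sym2 (Fin n) // ¬ e.IsDiag} → Ω → T)
    (hU : ∀ i, Measurable (U i)) (hV : ∀ e, Measurable (V e))
    (hUid : ∀ i j, IdentDistrib (U i) (U j) P P)
    (hVid : ∀ e e', IdentDistrib (V e) (V e') P P)
    (hindep : iIndep
      (Sum.elim (fun i => MeasurableSpace.comap (U i) inferInstance)
                (fun e => MeasurableSpace.comap (V e) inferInstance)
        : Fin n ⊕ {e : Sym2 (Fin n) // ¬ e.IsDiag} → MeasurableSpace Ω) P)
    (τ : S → S → T → ℝ)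
    (hτ : Measurable fun q : S × S × T => τ q.1 q.2.1 q.2.2)
    (Z : Fin n → Fin n → Ω → ℝ)
    (hZ : ∀ i j : Fin n, ∀ hij : i ≠ j,
      Z i j = fun ω => τ (U i ω) (U j ω)
        (V ⟨Sym2.mk i j, mt Sym2.mk_isDiag_iff.mp hij⟩ ω))
    (i0 i1 i2 : Fin n)
    (h0 : (i0 : ℕ) = 0) (h1 : (i1 : ℕ) = 1) (h2 : (i2 : ℕ) = 2)
    (hmean : ∫ ω, Z i0 i1 ω ∂P = 0)
    (hL2 : MemLp (Z i0 i1) 2 P) :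
    variance (fun ω => ∑ i : Fin n, ∑ j : Fin n, if i ≠ j then Z i j ω else 0) P
      = (n : ℝ) * ((n : ℝ) - 1) * ((n : ℝ) - 2) *
          ((∫ ω, Z i0 i1 ω * Z i0 i2 ω ∂P) + (∫ ω, Z i0 i1 ω * Z i2 i0 ω ∂P)
            + (∫ ω, Z i1 i0 ω * Z i0 i2 ω ∂P) + (∫ ω, Z i1 i0 ω * Z i2 i0 ω ∂P))
        + (n : ℝ) * ((n : ℝ) - 1) *
          ((∫ ω, (Z i0 i1 ω) ^ 2 ∂P) + (∫ ω, Z i0 i1 ω * Z i1 i0 ω ∂P)) :=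
  dyadic_sum_variance_formula_general P U V hU hV hUid hVid hindep τ hτ Z hZ i0 i1 i2 h0 h1 h2 hmean
    hL2
end

section
/- Let n = K·m with K ≥ 1 and m ≥ 2, and let I₁,…,I_K be a partition of {1,…,n} into K sets, each of cardinality m. Let (ψ_{ij}), indexed by the ordered pairs (i,j) of distinct elements of {1,…,n}, be square-integrable real random variables with E[ψ_{ij}] = 0 for every pair, E[ψ_{ij}·ψ_{kl}] = 0 whenever {i,j} ∩ {k,l} = ∅, and E[ψ_{ij}²] ≤ c² for every pair, where c ≥ 0. Then E[ ( (√n/K) · Σ_{k=1}^K (1/(m(m−1))) · Σ_{(i,j) ∈ I_k × I_k : i≠j} ψ_{ij} )² ] ≤ 8c². -/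
/-!
Expanding the square, the cross-fitted score is `√n / (K m (m - 1))` times `∑ₖ Sₖ`, where `Sₖ`
is the dyadic sum over the ordered pairs of distinct nodes of fold `k`. Pairs taken from disjoint
folds share no node, so the `Sₖ` are orthogonal and `E[(∑ₖ Sₖ)²] = ∑ₖ E[Sₖ²]`. Within a fold
of size `m`, each of the `m (m - 1)` pairs is correlated with at most `4 m` pairs (those meeting
it in a node), and each such cross moment is at most `c²` by `2 x y ≤ x² + y²`; hence
`E[Sₖ²] ≤ 4 m² (m - 1) c²`. Since `n = K m`, the total is `4 m / (m - 1) · c² ≤ 8 c²`.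
-/

open MeasureTheory ProbabilityTheory

open Finset

section SecondMoments

variable {Ω ι : Type*} [MeasurableSpace Ω] {P : Measure Ω}

theorem integral_mul_le_of_integral_sq_le {f g : Ω → ℝ} {C : ℝ} (hf : MemLp f 2 P)
    (hg : MemLp g 2 P) (hf2 : ∫ ω, f ω ^ 2 ∂P ≤ C) (hg2 : ∫ ω, g ω ^ 2 ∂P ≤ C) :
    ∫ ω, f ω * g ω ∂P ≤ C := by
  calc ∫ ω, f ω * g ω ∂P ≤ ∫ ω, (f ω ^ 2 + g ω ^ 2) / 2 ∂P :=
        integral_mono (hf.integrable_mul hg)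
          ((hf.integrable_sq.add hg.integrable_sq).div_const 2)
          fun ω => by nlinarith [sq_nonneg (f ω - g ω)]
    _ = (∫ ω, f ω ^ 2 ∂P + ∫ ω, g ω ^ 2 ∂P) / 2 := by
        rw [integral_div, integral_add hf.integrable_sq hg.integrable_sq]
    _ ≤ C := by linarith

theorem integral_finsetSum_mul_finsetSum {κ : Type*} {s : Finset ι} {t : Finset κ}
    {f : ι → Ω → ℝ} {g : κ → Ω → ℝ} (hf : ∀ a ∈ s, MemLp (f a) 2 P)
    (hg : ∀ b ∈ t, MemLp (g b) 2 P) :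
    ∫ ω, (∑ a ∈ s, f a ω) * (∑ b ∈ t, g b ω) ∂P
      = ∑ a ∈ s, ∑ b ∈ t, ∫ ω, f a ω * g b ω ∂P := by
  have hint : ∀ a ∈ s, ∀ b ∈ t, Integrable (fun ω => f a ω * g b ω) P :=
    fun a ha b hb => (hf a ha).integrable_mul (hg b hb)
  simp_rw [sum_mul_sum]
  rw [integral_finsetSum _ fun a ha => integrable_finsetSum _ (hint a ha)]
  exact sum_congr rfl fun a ha => integral_finsetSum _ (hint a ha)

theorem integral_sq_finsetSum_of_orthogonal {s : Finset ι} {f : ι → Ω → ℝ}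
    (hf : ∀ a ∈ s, MemLp (f a) 2 P)
    (horth : ∀ a ∈ s, ∀ b ∈ s, a ≠ b → ∫ ω, f a ω * f b ω ∂P = 0) :
    ∫ ω, (∑ a ∈ s, f a ω) ^ 2 ∂P = ∑ a ∈ s, ∫ ω, f a ω ^ 2 ∂P := by
  simp_rw [sq]
  rw [integral_finsetSum_mul_finsetSum hf hf]
  exact sum_congr rfl fun a ha =>
    sum_eq_single_of_mem a ha fun b hb hba => horth a ha b hb hba.symm

theorem integral_sq_finsetSum_le {s : Finset ι} (R : ι → ι → Prop) [DecidableRel R]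
    {f : ι → Ω → ℝ} {C : ℝ} (hf : ∀ a ∈ s, MemLp (f a) 2 P)
    (hsq : ∀ a ∈ s, ∫ ω, f a ω ^ 2 ∂P ≤ C)
    (horth : ∀ a ∈ s, ∀ b ∈ s, ¬ R a b → ∫ ω, f a ω * f b ω ∂P = 0) :
    ∫ ω, (∑ a ∈ s, f a ω) ^ 2 ∂P ≤ ∑ a ∈ s, #{b ∈ s | R a b} * C := by
  simp_rw [sq]
  rw [integral_finsetSum_mul_finsetSum hf hf]
  refine sum_le_sum fun a ha => ?_
  rw [← sum_filter_of_ne fun b hb hne => not_not.1 fun h => hne (horth a ha b hb h),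
    ← nsmul_eq_mul]
  exact sum_le_card_nsmul _ _ _ fun b hb =>
    integral_mul_le_of_integral_sq_le (hf a ha) (hf b (mem_filter.1 hb).1) (hsq a ha)
      (hsq b (mem_filter.1 hb).1)

end SecondMoments

section Dyadic

variable {α : Type*}

theorem sum_sum_ite_ne_eq_sum_offDiag [DecidableEq α] {M : Type*} [AddCommMonoid M]
    (s : Finset α) (g : α → α → M) :
    ∑ i ∈ s, ∑ j ∈ s, (if i ≠ j then g i j else 0) = ∑ q ∈ s.offDiag, g q.1 q.2 := by
  rw [← sum_product' (f := fun i j => if i ≠ j then g i j else 0), ← sum_filter]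
  congr 1
  ext q
  simp [and_assoc]

theorem card_filter_offDiag_fst_mem_or_snd_mem_le [DecidableEq α] (s e : Finset α) :
    #{q ∈ s.offDiag | q.1 ∈ e ∨ q.2 ∈ e} ≤ 2 * #e * #s := by
  calc #{q ∈ s.offDiag | q.1 ∈ e ∨ q.2 ∈ e} ≤ #(e ×ˢ s ∪ s ×ˢ e) := by
        refine card_le_card fun q hq => ?_
        simp only [mem_filter, mem_offDiag] at hq
        simp only [mem_union, mem_product]
        tauto
    _ ≤ 2 * #e * #s := by
        grw [card_union_le, card_product, card_product]
        linarith

variable {Ω : Type*} [MeasurableSpace Ω] {P : Measure Ω} {ψ : α → α → Ω → ℝ}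

def dyadicSum (ψ : α → α → Ω → ℝ) (s : Finset α) (ω : Ω) : ℝ :=
  ∑ q ∈ s.offDiag, ψ q.1 q.2 ω

theorem memLp_dyadicSum (hL2 : ∀ i j, i ≠ j → MemLp (ψ i j) 2 P) (s : Finset α) :
    MemLp (dyadicSum ψ s) 2 P :=
  memLp_finsetSum _ fun _ hq => hL2 _ _ (mem_offDiag.1 hq).2.2

theorem integral_dyadicSum_mul_eq_zero_of_disjoint (hL2 : ∀ i j, i ≠ j → MemLp (ψ i j) 2 P)
    (huncorr : ∀ i j k l, i ≠ j → k ≠ l →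
      ({i, j} : Set α) ∩ ({k, l} : Set α) = ∅ → ∫ ω, ψ i j ω * ψ k l ω ∂P = 0)
    {s t : Finset α} (hst : Disjoint s t) :
    ∫ ω, dyadicSum ψ s ω * dyadicSum ψ t ω ∂P = 0 := by
  have hL2' : ∀ u : Finset α, ∀ q ∈ u.offDiag, MemLp (ψ q.1 q.2) 2 P :=
    fun u q hq => hL2 _ _ (mem_offDiag.1 hq).2.2
  simp only [dyadicSum]
  rw [integral_finsetSum_mul_finsetSum (hL2' s) (hL2' t)]
  refine sum_eq_zero fun p hp => sum_eq_zero fun q hq => ?_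
  rw [mem_offDiag] at hp hq
  refine huncorr _ _ _ _ hp.2.2 hq.2.2 (Set.disjoint_iff_inter_eq_empty.1 ?_)
  refine (disjoint_coe.2 hst).mono ?_ ?_ <;>
    simp [Set.insert_subset_iff, hp.1, hp.2.1, hq.1, hq.2.1]

theorem integral_sq_dyadicSum_le [DecidableEq α] (hL2 : ∀ i j, i ≠ j → MemLp (ψ i j) 2 P)
    (huncorr : ∀ i j k l, i ≠ j → k ≠ l →
      ({i, j} : Set α) ∩ ({k, l} : Set α) = ∅ → ∫ ω, ψ i j ω * ψ k l ω ∂P = 0)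
    {c : ℝ} (hbound : ∀ i j, i ≠ j → ∫ ω, ψ i j ω ^ 2 ∂P ≤ c ^ 2) (s : Finset α) :
    ∫ ω, dyadicSum ψ s ω ^ 2 ∂P ≤ 4 * #s ^ 2 * (#s - 1) * c ^ 2 := by
  have hoff : ∀ q ∈ s.offDiag, q.1 ≠ q.2 := fun q hq => (mem_offDiag.1 hq).2.2
  calc ∫ ω, dyadicSum ψ s ω ^ 2 ∂P
      ≤ ∑ p ∈ s.offDiag, #{q ∈ s.offDiag | q.1 ∈ ({p.1, p.2} : Finset α) ∨
          q.2 ∈ ({p.1, p.2} : Finset α)} * c ^ 2 :=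
        integral_sq_finsetSum_le _ (fun q hq => hL2 _ _ (hoff q hq))
          (fun q hq => hbound _ _ (hoff q hq)) fun p hp q hq hpq =>
            huncorr _ _ _ _ (hoff p hp) (hoff q hq) (by ext; aesop)
    _ ≤ ∑ p ∈ s.offDiag, (4 * #s : ℝ) * c ^ 2 := by
        gcongr with p
        have hcount := (card_filter_offDiag_fst_mem_or_snd_mem_le s {p.1, p.2}).trans
          (by grw [card_le_two] : 2 * #{p.1, p.2} * #s ≤ 4 * #s)
        exact_mod_cast hcount
    _ = 4 * #s ^ 2 * (#s - 1) * c ^ 2 := by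
        rw [sum_const, offDiag_card, nsmul_eq_mul, Nat.cast_sub (Nat.le_mul_self _)]
        push_cast
        ring

end Dyadic

theorem cross_fitting_scale_sq_mul_le {K m : ℝ} (hK : 0 < K) (hm : 2 ≤ m) :
    (√(K * m) / K * (m * (m - 1))⁻¹) ^ 2 * (K * (4 * m ^ 2 * (m - 1))) ≤ 8 := by
  have hm1 : 0 < m - 1 := by linarith
  rw [mul_pow, div_pow, Real.sq_sqrt (by positivity)]
  field_simp
  nlinarith

theorem dyadic_cross_fitted_score_second_moment_general
    {Ω : Type*} [MeasurableSpace Ω] (P : Measure Ω)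
    (n K m : ℕ) (hK : 1 ≤ K) (hm : 2 ≤ m) (hn : n = K * m)
    (I : Fin K → Finset (Fin n))
    (hdisj : ∀ k k' : Fin K, k ≠ k' → Disjoint (I k) (I k'))
    (hcard : ∀ k : Fin K, (I k).card = m)
    (c : ℝ)
    (ψ : Fin n → Fin n → Ω → ℝ)
    (hL2 : ∀ i j : Fin n, i ≠ j → MemLp (ψ i j) 2 P)
    (huncorr : ∀ i j k l : Fin n, i ≠ j → k ≠ l →
      ({i, j} : Set (Fin n)) ∩ ({k, l} : Set (Fin n)) = ∅ →
      ∫ ω, ψ i j ω * ψ k l ω ∂P = 0)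
    (hbound : ∀ i j : Fin n, i ≠ j → ∫ ω, (ψ i j ω) ^ 2 ∂P ≤ c ^ 2) :
    ∫ ω, ((Real.sqrt n / (K : ℝ)) *
        ∑ k : Fin K, ((m : ℝ) * ((m : ℝ) - 1))⁻¹ *
          ∑ i ∈ I k, ∑ j ∈ I k, (if i ≠ j then ψ i j ω else 0)) ^ 2 ∂P
      ≤ 8 * c ^ 2 := by
  set C : ℝ := Real.sqrt n / K * ((m : ℝ) * (m - 1))⁻¹
  have hfolds : ∫ ω, (∑ k, dyadicSum ψ (I k) ω) ^ 2 ∂P ≤ K * (4 * m ^ 2 * (m - 1) * c ^ 2) :=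
    calc ∫ ω, (∑ k, dyadicSum ψ (I k) ω) ^ 2 ∂P = ∑ k, ∫ ω, dyadicSum ψ (I k) ω ^ 2 ∂P :=
          integral_sq_finsetSum_of_orthogonal (fun k _ => memLp_dyadicSum hL2 _)
            fun k _ k' _ hkk' =>
              integral_dyadicSum_mul_eq_zero_of_disjoint hL2 huncorr (hdisj k k' hkk')
      _ ≤ ∑ _k : Fin K, 4 * (m : ℝ) ^ 2 * (m - 1) * c ^ 2 :=
          sum_le_sum fun k _ => hcard k ▸ integral_sq_dyadicSum_le hL2 huncorr hbound (I k)
      _ = K * (4 * m ^ 2 * (m - 1) * c ^ 2) := by simp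
  have hscale : C ^ 2 * (K * (4 * m ^ 2 * (m - 1))) ≤ 8 := by
    simpa only [C, hn, Nat.cast_mul] using
      cross_fitting_scale_sq_mul_le (by exact_mod_cast hK) (by exact_mod_cast hm)
  calc _ = C ^ 2 * ∫ ω, (∑ k, dyadicSum ψ (I k) ω) ^ 2 ∂P := by
        rw [← integral_const_mul]
        simp only [← mul_sum, sum_sum_ite_ne_eq_sum_offDiag, C, mul_pow, dyadicSum, mul_assoc]
    _ ≤ C ^ 2 * (K * (4 * m ^ 2 * (m - 1) * c ^ 2)) := by gcongr
    _ = C ^ 2 * (K * (4 * m ^ 2 * (m - 1))) * c ^ 2 := by ring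
    _ ≤ 8 * c ^ 2 := by gcongr

/-- Second-moment bound for the scaled K-fold cross-fitted dyadic score: within-fold
dyadic sample means of a mean-zero array, uncorrelated across pairs sharing no node. -/
theorem dyadic_cross_fitted_score_second_moment
    {Ω : Type*} [MeasurableSpace Ω] (P : Measure Ω) [IsProbabilityMeasure P]
    (n K m : ℕ) (hK : 1 ≤ K) (hm : 2 ≤ m) (hn : n = K * m)
    (I : Fin K → Finset (Fin n))
    (hdisj : ∀ k k' : Fin K, k ≠ k' → Disjoint (I k) (I k'))
    (hcover : ∀ i : Fin n, ∃ k : Fin K, i ∈ I k)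
    (hcard : ∀ k : Fin K, (I k).card = m)
    (c : ℝ) (hc : 0 ≤ c)
    (ψ : Fin n → Fin n → Ω → ℝ)
    (hL2 : ∀ i j : Fin n, i ≠ j → MemLp (ψ i j) 2 P)
    (hmean : ∀ i j : Fin n, i ≠ j → ∫ ω, ψ i j ω ∂P = 0)
    (huncorr : ∀ i j k l : Fin n, i ≠ j → k ≠ l →
      ({i, j} : Set (Fin n)) ∩ ({k, l} : Set (Fin n)) = ∅ →
      ∫ ω, ψ i j ω * ψ k l ω ∂P = 0)
    (hbound : ∀ i j : Fin n, i ≠ j → ∫ ω, (ψ i j ω) ^ 2 ∂P ≤ c ^ 2) :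
    ∫ ω, ((Real.sqrt n / (K : ℝ)) *
        ∑ k : Fin K, ((m : ℝ) * ((m : ℝ) - 1))⁻¹ *
          ∑ i ∈ I k, ∑ j ∈ I k, (if i ≠ j then ψ i j ω else 0)) ^ 2 ∂P
      ≤ 8 * c ^ 2 :=
  dyadic_cross_fitted_score_second_moment_general P n K m hK hm hn I hdisj hcard c ψ hL2 huncorr
    hbound
end

section
/- Let θ₀ ∈ ℝ and β₀, γ₀ ∈ ℝ^p, and assume: (a) 0 ≤ Y ≤ 1 almost surely; (b) D and every coordinate X_l (l = 1,…,p) of X are square-integrable; (c) E[Y | σ(D,X)] = Λ(Dθ₀ + ⟨X, β₀⟩) almost surely; (d) E[ Λ'(Dθ₀ + ⟨X, β₀⟩) · (D − ⟨X, γ₀⟩) · X_l ] = 0 for every l = 1,…,p. Then for all β, γ ∈ ℝ^p, the function φ(r) := E[ (Y − Λ(Dθ₀ + ⟨X, β₀ + r(β−β₀)⟩)) · (D − ⟨X, γ₀ + r(γ−γ₀)⟩) ] satisfies φ(0) = 0 and φ is differentiable at r = 0 with φ'(0) = 0. -/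
open MeasureTheory ProbabilityTheory

/-- The logistic function Λ(t) = exp t / (1 + exp t). -/
noncomputable def logistic (t : ℝ) : ℝ := Real.exp t / (1 + Real.exp t)

/-- The derivative of the logistic function, Λ'(t) = Λ(t)(1 − Λ(t)). -/
noncomputable def logisticDeriv (t : ℝ) : ℝ := logistic t * (1 - logistic t)

/-!
Conditioning on `σ(D, X)` makes the residual `Y - Λ(Dθ₀ + ⟨X, β₀⟩)` orthogonal to every integrable
`σ(D, X)`-measurable function. Since `D - ⟨X, γ₀⟩` and `⟨X, γ - γ₀⟩` are such functions, this gives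
`φ(0) = 0` and kills the `γ`-part of `φ'(0)`; the `β`-part `-E[Λ' · (D - ⟨X, γ₀⟩) · ⟨X, β - β₀⟩]`
is a linear combination of the weighted projection conditions (d). Differentiation under the
integral sign is justified by domination: `|Y - Λ| ≤ 1` and `0 ≤ Λ' ≤ 1`, so the derivative of the
integrand is bounded by products of square-integrable functions.
-/

lemma logistic_eq_sigmoid : logistic = Real.sigmoid := by
  funext t
  rw [logistic, Real.sigmoid_def, Real.exp_neg]
  field_simp
  ring

lemma logistic_pos (t : ℝ) : 0 < logistic t := logistic_eq_sigmoid ▸ Real.sigmoid_pos t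

lemma logistic_lt_one (t : ℝ) : logistic t < 1 := logistic_eq_sigmoid ▸ Real.sigmoid_lt_one t

@[fun_prop]
lemma continuous_logistic : Continuous logistic := logistic_eq_sigmoid ▸ continuous_sigmoid

@[fun_prop]
lemma continuous_logisticDeriv : Continuous logisticDeriv :=
  continuous_logistic.mul (continuous_const.sub continuous_logistic)

lemma hasDerivAt_logistic (t : ℝ) : HasDerivAt logistic (logisticDeriv t) t := by
  rw [logisticDeriv, logistic_eq_sigmoid]
  exact Real.hasDerivAt_sigmoid t

lemma abs_logisticDeriv_le_one (t : ℝ) : |logisticDeriv t| ≤ 1 := by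
  have h0 := logistic_pos t
  have h1 := logistic_lt_one t
  rw [logisticDeriv, abs_le]
  constructor <;> nlinarith

lemma abs_sub_logistic_le_one {y : ℝ} (hy₀ : 0 ≤ y) (hy₁ : y ≤ 1) (t : ℝ) :
    |y - logistic t| ≤ 1 :=
  abs_sub_le_iff.2 ⟨by linarith [logistic_pos t], by linarith [logistic_lt_one t]⟩

lemma hasDerivAt_logistic_residual_mul (y t u w v r : ℝ) :
    HasDerivAt (fun s => (y - logistic (t + s * u)) * (w - s * v))
      (-(logisticDeriv (t + r * u) * (w - r * v) * u) - (y - logistic (t + r * u)) * v) r := by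
  have hΛ := (hasDerivAt_logistic (t + r * u)).comp r (((hasDerivAt_id r).mul_const u).const_add t)
  have h : HasDerivAt (fun s => (y - logistic (t + s * u)) * (w - s * v))
      (-(logisticDeriv (t + r * u) * (1 * u)) * (w - r * v) + (y - logistic (t + r * u)) * -v) r :=
    (hΛ.const_sub y).mul ((hasDerivAt_mul_const v).const_sub w)
  convert h using 1
  ring

lemma abs_logistic_residual_mul_deriv_le {y t u w v r : ℝ} (hy₀ : 0 ≤ y) (hy₁ : y ≤ 1)
    (hr : |r| ≤ 1) :
    |-(logisticDeriv (t + r * u) * (w - r * v) * u) - (y - logistic (t + r * u)) * v|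
      ≤ |u| * (|w| + |v|) + |v| := by
  have hΛ' := abs_logisticDeriv_le_one (t + r * u)
  have hres := abs_sub_logistic_le_one hy₀ hy₁ (t + r * u)
  have hwv : |w - r * v| ≤ |w| + |v| := by
    calc |w - r * v| ≤ |w| + |r| * |v| := by rw [← abs_mul]; exact abs_sub _ _
      _ ≤ |w| + |v| := by gcongr; exact mul_le_of_le_one_left (abs_nonneg _) hr
  calc _ ≤ |logisticDeriv (t + r * u)| * |w - r * v| * |u| + |y - logistic (t + r * u)| * |v| := by
        rw [← abs_mul, ← abs_mul, ← abs_mul, ← abs_neg (_ * _ * _)]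
        exact abs_sub _ _
    _ ≤ 1 * (|w| + |v|) * |u| + 1 * |v| := by gcongr
    _ = |u| * (|w| + |v|) + |v| := by ring

section

variable {Ω : Type*} {𝒢 m : MeasurableSpace Ω} {P : Measure Ω}

theorem integral_sub_mul_eq_zero_of_condExp_ae_eq (h𝒢 : 𝒢 ≤ m)
    [SigmaFinite (P.trim h𝒢)] {Y f g : Ω → ℝ} (hcond : P[Y|𝒢] =ᵐ[P] f)
    (hg : StronglyMeasurable[𝒢] g) (hY : Integrable Y P) (hgY : Integrable (g * Y) P) :
    ∫ ω, (Y ω - f ω) * g ω ∂P = 0 := by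
  have hpull : P[g * Y|𝒢] =ᵐ[P] g * f :=
    (condExp_mul_of_stronglyMeasurable_left hg hgY hY).trans
      ((Filter.EventuallyEq.refl _ g).mul hcond)
  have hgf : Integrable (g * f) P := integrable_condExp.congr hpull
  calc ∫ ω, (Y ω - f ω) * g ω ∂P = ∫ ω, (g * Y) ω ∂P - ∫ ω, (g * f) ω ∂P := by
        rw [← integral_sub hgY hgf]; congr 1; funext ω; simp only [Pi.mul_apply]; ring
    _ = 0 := by rw [← integral_condExp h𝒢, integral_congr_ae hpull, sub_self]

section LogisticResidual

variable {Y t : Ω → ℝ}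

lemma integrable_logistic_residual_mul (hY : AEStronglyMeasurable Y P)
    (hYb : ∀ᵐ ω ∂P, 0 ≤ Y ω ∧ Y ω ≤ 1) (ht : AEStronglyMeasurable t P) {g : Ω → ℝ}
    (hg : Integrable g P) : Integrable (fun ω => (Y ω - logistic (t ω)) * g ω) P :=
  hg.bdd_mul (hY.sub (continuous_logistic.comp_aestronglyMeasurable ht))
    (by filter_upwards [hYb] with ω h using abs_sub_logistic_le_one h.1 h.2 _)

lemma integrable_logisticDeriv_mul_mul (ht : AEStronglyMeasurable t P) {f g : Ω → ℝ}
    (hf : MemLp f 2 P) (hg : MemLp g 2 P) :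
    Integrable (fun ω => logisticDeriv (t ω) * f ω * g ω) P := by
  simpa only [Pi.mul_apply, mul_assoc] using (hf.integrable_mul hg).bdd_mul
    (continuous_logisticDeriv.comp_aestronglyMeasurable ht)
    (.of_forall fun ω => abs_logisticDeriv_le_one (t ω))

theorem integral_logistic_residual_mul_eq_zero [IsFiniteMeasure P] (h𝒢 : 𝒢 ≤ m)
    (hY : AEStronglyMeasurable Y P) (hYb : ∀ᵐ ω ∂P, 0 ≤ Y ω ∧ Y ω ≤ 1)
    (hcond : P[Y|𝒢] =ᵐ[P] fun ω => logistic (t ω)) {g : Ω → ℝ}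
    (hg : StronglyMeasurable[𝒢] g) (hg_int : Integrable g P) :
    ∫ ω, (Y ω - logistic (t ω)) * g ω ∂P = 0 := by
  have hYle : ∀ᵐ ω ∂P, ‖Y ω‖ ≤ 1 := by
    filter_upwards [hYb] with ω h using abs_le.2 ⟨by linarith [h.1], h.2⟩
  exact integral_sub_mul_eq_zero_of_condExp_ae_eq h𝒢 hcond hg (.of_bound hY 1 hYle)
    (hg_int.mul_bdd hY hYle)

theorem hasDerivAt_integral_logistic_residual_mul [IsFiniteMeasure P]
    (hY : AEStronglyMeasurable Y P) (hYb : ∀ᵐ ω ∂P, 0 ≤ Y ω ∧ Y ω ≤ 1)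
    (ht : AEStronglyMeasurable t P) {u v W : Ω → ℝ}
    (hu : MemLp u 2 P) (hv : MemLp v 2 P) (hW : MemLp W 2 P) :
    HasDerivAt (fun r : ℝ => ∫ ω, (Y ω - logistic (t ω + r * u ω)) * (W ω - r * v ω) ∂P)
      (∫ ω, -(logisticDeriv (t ω) * W ω * u ω) - (Y ω - logistic (t ω)) * v ω ∂P) 0 := by
  have hu_meas := hu.aestronglyMeasurable
  have hv_meas := hv.aestronglyMeasurable
  have hW_meas := hW.aestronglyMeasurable
  have hbound : Integrable (fun ω => |u ω| * (|W ω| + |v ω|) + |v ω|) P := by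
    simp only [mul_add, ← abs_mul]
    exact ((hu.integrable_mul hW).abs.add (hu.integrable_mul hv).abs).add
      (hv.integrable one_le_two).abs
  have key := hasDerivAt_integral_of_dominated_loc_of_deriv_le (x₀ := 0)
    (F' := fun r ω => -(logisticDeriv (t ω + r * u ω) * (W ω - r * v ω) * u ω) -
      (Y ω - logistic (t ω + r * u ω)) * v ω)
    (Metric.closedBall_mem_nhds 0 one_pos)
    (.of_forall fun r => by fun_prop)
    (by simpa only [zero_mul, add_zero, sub_zero] using
      integrable_logistic_residual_mul hY hYb ht (hW.integrable one_le_two))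
    (by fun_prop)
    (by
      filter_upwards [hYb] with ω hω r hr
      exact abs_logistic_residual_mul_deriv_le hω.1 hω.2 (by simpa using hr))
    hbound
    (.of_forall fun ω r _ => hasDerivAt_logistic_residual_mul (Y ω) (t ω) (u ω) (W ω) (v ω) r)
  simpa using key.2

theorem logistic_residual_moment_and_orthogonality [IsFiniteMeasure P] (h𝒢 : 𝒢 ≤ m)
    (hY : AEStronglyMeasurable Y P) (hYb : ∀ᵐ ω ∂P, 0 ≤ Y ω ∧ Y ω ≤ 1)
    (ht : AEStronglyMeasurable t P) (hcond : P[Y|𝒢] =ᵐ[P] fun ω => logistic (t ω))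
    {u v W : Ω → ℝ} (hv𝒢 : StronglyMeasurable[𝒢] v) (hW𝒢 : StronglyMeasurable[𝒢] W)
    (hu : MemLp u 2 P) (hv : MemLp v 2 P) (hW : MemLp W 2 P)
    (horth : ∫ ω, logisticDeriv (t ω) * W ω * u ω ∂P = 0) :
    ∫ ω, (Y ω - logistic (t ω)) * W ω ∂P = 0 ∧
      HasDerivAt (fun r : ℝ => ∫ ω, (Y ω - logistic (t ω + r * u ω)) * (W ω - r * v ω) ∂P) 0 0 := by
  have hv_int := hv.integrable one_le_two
  have hW_int := hW.integrable one_le_two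
  refine ⟨integral_logistic_residual_mul_eq_zero h𝒢 hY hYb hcond hW𝒢 hW_int, ?_⟩
  convert hasDerivAt_integral_logistic_residual_mul hY hYb ht hu hv hW using 1
  rw [integral_sub (integrable_logisticDeriv_mul_mul ht hW hu).fun_neg
    (integrable_logistic_residual_mul hY hYb ht hv_int), integral_neg,
    horth, integral_logistic_residual_mul_eq_zero h𝒢 hY hYb hcond hv𝒢 hv_int, neg_zero, sub_zero]

end LogisticResidual

section DotProduct

variable {ι : Type*} [Fintype ι] {X : Ω → ι → ℝ}

lemma memLp_dotProduct {p : ENNReal} (hX : ∀ l, MemLp (fun ω => X ω l) p P) (c : ι → ℝ) :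
    MemLp (fun ω => X ω ⬝ᵥ c) p P :=
  memLp_finsetSum _ fun l _ => (hX l).mul_const (c l)

lemma integral_mul_dotProduct_eq_zero {f : Ω → ℝ}
    (hint : ∀ l, Integrable (fun ω => f ω * X ω l) P) (horth : ∀ l, ∫ ω, f ω * X ω l ∂P = 0)
    (c : ι → ℝ) : ∫ ω, f ω * X ω ⬝ᵥ c ∂P = 0 := by
  simp only [dotProduct, Finset.mul_sum, ← mul_assoc]
  rw [integral_finsetSum _ fun l _ => (hint l).mul_const (c l)]
  exact Finset.sum_eq_zero fun l _ => by rw [integral_mul_const, horth l, zero_mul]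

end DotProduct

end

/-- Moment condition and Neyman orthogonality of the logistic dyadic link formation
score with respect to the nuisance parameters (β, γ) at (β₀, γ₀). -/
theorem logistic_score_neyman_orthogonality
    {Ω : Type*} [MeasurableSpace Ω] (P : Measure Ω) [IsProbabilityMeasure P]
    {p : ℕ} (Y D : Ω → ℝ) (X : Ω → Fin p → ℝ)
    (hY : Measurable Y) (hD : Measurable D) (hX : Measurable X)
    (θ₀ : ℝ) (β₀ γ₀ : Fin p → ℝ)
    (hYb : ∀ᵐ ω ∂P, 0 ≤ Y ω ∧ Y ω ≤ 1)
    (hD2 : MemLp D 2 P)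
    (hX2 : ∀ l : Fin p, MemLp (fun ω => X ω l) 2 P)
    (hcond : P[Y | MeasurableSpace.comap (fun ω => (D ω, X ω)) inferInstance]
      =ᵐ[P] fun ω => logistic (D ω * θ₀ + ∑ l, X ω l * β₀ l))
    (horth : ∀ l : Fin p,
      ∫ ω, logisticDeriv (D ω * θ₀ + ∑ l', X ω l' * β₀ l') *
        (D ω - ∑ l', X ω l' * γ₀ l') * X ω l ∂P = 0) :
    ∀ β γ : Fin p → ℝ,
      ((fun r : ℝ => ∫ ω,
          (Y ω - logistic (D ω * θ₀ + ∑ l, X ω l * (β₀ l + r * (β l - β₀ l)))) *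
          (D ω - ∑ l, X ω l * (γ₀ l + r * (γ l - γ₀ l))) ∂P) 0 = 0)
      ∧ HasDerivAt
          (fun r : ℝ => ∫ ω,
            (Y ω - logistic (D ω * θ₀ + ∑ l, X ω l * (β₀ l + r * (β l - β₀ l)))) *
            (D ω - ∑ l, X ω l * (γ₀ l + r * (γ l - γ₀ l))) ∂P)
          0 0 := by
  intro β γ
  have hcomap_le := (hD.prodMk hX).comap_le
  have hcomap_meas {g : ℝ × (Fin p → ℝ) → ℝ} (hg : Continuous g) :
      StronglyMeasurable[MeasurableSpace.comap (fun ω => (D ω, X ω)) inferInstance]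
        fun ω => g (D ω, X ω) :=
    (hg.measurable.comp (comap_measurable _)).stronglyMeasurable
  have ht : AEStronglyMeasurable (fun ω => D ω * θ₀ + X ω ⬝ᵥ β₀) P :=
    ((hcomap_meas (g := fun q => q.1 * θ₀ + q.2 ⬝ᵥ β₀) (by fun_prop)).mono
      hcomap_le).aestronglyMeasurable
  have hW2 : MemLp (fun ω => D ω - X ω ⬝ᵥ γ₀) 2 P := hD2.sub (memLp_dotProduct hX2 γ₀)
  have horth' := integral_mul_dotProduct_eq_zero
    (fun l => integrable_logisticDeriv_mul_mul ht hW2 (hX2 l)) horth (β - β₀)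
  have key := logistic_residual_moment_and_orthogonality hcomap_le hY.aestronglyMeasurable hYb
    ht hcond
    (hcomap_meas (g := fun q => q.2 ⬝ᵥ (γ - γ₀)) (by fun_prop))
    (hcomap_meas (g := fun q => q.1 - q.2 ⬝ᵥ γ₀) (by fun_prop))
    (memLp_dotProduct hX2 (β - β₀)) (memLp_dotProduct hX2 (γ - γ₀)) hW2 horth'
  show (∫ ω, (Y ω - logistic (D ω * θ₀ + X ω ⬝ᵥ (β₀ + (0 : ℝ) • (β - β₀)))) *
      (D ω - X ω ⬝ᵥ (γ₀ + (0 : ℝ) • (γ - γ₀))) ∂P) = 0 ∧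
    HasDerivAt (fun r : ℝ => ∫ ω, (Y ω - logistic (D ω * θ₀ + X ω ⬝ᵥ (β₀ + r • (β - β₀)))) *
      (D ω - X ω ⬝ᵥ (γ₀ + r • (γ - γ₀))) ∂P) 0 0
  simp only [dotProduct_add, dotProduct_smul, smul_eq_mul, ← add_assoc, sub_add_eq_sub_sub]
  simpa using key
end

section
/- Let θ₀ ∈ ℝ, β₀, γ₀ ∈ ℝ^p, and C₁ ≥ 1. Assume: (a) 0 ≤ Y ≤ 1 almost surely; (b) E[ ((D, X)·ξ)⁴ ] ≤ C₁ for every unit vector ξ ∈ ℝ^{p+1}; (c) ‖γ₀‖ ≤ C₁. For θ ∈ ℝ, β, γ ∈ ℝ^p and r ∈ [0,1], set Ξ_r := Dθ + ⟨X, β₀ + r(β−β₀)⟩ and g_r := −(Y − Λ(Ξ_r))·⟨X, γ−γ₀⟩ − Λ'(Ξ_r)·(D − ⟨X, γ₀ + r(γ−γ₀)⟩)·⟨X, β−β₀⟩ (the pointwise derivative in r of the score along the nuisance path). Then there exists a constant C, depending only on C₁, such that for all θ ∈ ℝ, all r ∈ [0,1], and all β, γ ∈ ℝ^p with ‖γ−γ₀‖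 ≤ 1, |E[g_r]| ≤ C·( ‖β−β₀‖ + ‖γ−γ₀‖ ). -/
open MeasureTheory ProbabilityTheory

lemma abs_neg_mul_sub_mul_mul_le {y d x u v : ℝ} (hy : |y| ≤ 1) (hd : |d| ≤ 1) :
    |-y * x - d * u * v| ≤ |x| + |u * v| :=
  calc |-y * x - d * u * v| ≤ |y| * |x| + |d| * |u * v| := by
        simpa only [abs_mul, abs_neg, mul_assoc] using abs_sub (-y * x) (d * (u * v))
    _ ≤ |x| + |u * v| := by
        gcongr
        · exact mul_le_of_le_one_left (abs_nonneg x) hy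
        · exact mul_le_of_le_one_left (abs_nonneg _) hd

lemma abs_le_one_add_sq_div_two (x : ℝ) : |x| ≤ (1 + x ^ 2) / 2 := by
  nlinarith [sq_nonneg (|x| - 1), sq_abs x]

lemma abs_mul_le_add_sq_div_two (x y : ℝ) : |x * y| ≤ (x ^ 2 + y ^ 2) / 2 := by
  rw [abs_mul]
  nlinarith [sq_nonneg (|x| - |y|), sq_abs x, sq_abs y]

lemma LinearMap.exists_norm_eq_one_apply_eq_norm_smul {E F : Type*} [NormedAddCommGroup E]
    [NormedSpace ℝ E] [Nontrivial E] [AddCommGroup F] [Module ℝ F] (f : E →ₗ[ℝ] F) (a : E) :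
    ∃ u : E, ‖u‖ = 1 ∧ f a = ‖a‖ • f u := by
  rcases eq_or_ne a 0 with rfl | ha
  · obtain ⟨u, hu⟩ := exists_norm_eq E zero_le_one
    exact ⟨u, hu, by simp⟩
  · refine ⟨‖a‖⁻¹ • a, by simp [norm_smul, ha], ?_⟩
    rw [← map_smul, smul_smul, mul_inv_cancel₀ (norm_ne_zero_iff.2 ha), one_smul]

lemma norm_add_smul_le {E : Type*} [SeminormedAddCommGroup E] [NormedSpace ℝ E] {r : ℝ}
    (hr₀ : 0 ≤ r) (hr₁ : r ≤ 1) (a v : E) : ‖a + r • v‖ ≤ ‖a‖ + ‖v‖ :=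
  calc ‖a + r • v‖ ≤ ‖a‖ + r * ‖v‖ := by
        simpa [norm_smul, abs_of_nonneg hr₀] using norm_add_le a (r • v)
    _ ≤ ‖a‖ + ‖v‖ := by gcongr; exact mul_le_of_le_one_left (norm_nonneg v) hr₁

section MomentBounds

variable {Ω E : Type*} [MeasurableSpace Ω] {P : Measure Ω}
  [NormedAddCommGroup E] [NormedSpace ℝ E] [Nontrivial E] {Z : E →ₗ[ℝ] Ω → ℝ} {M : ℝ}

lemma memLp_two_of_forall_norm_eq_one (hZ : ∀ u, ‖u‖ = 1 → MemLp (Z u) 2 P) (a : E) :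
    MemLp (Z a) 2 P := by
  obtain ⟨u, hu, ha⟩ := Z.exists_norm_eq_one_apply_eq_norm_smul a
  rw [ha]
  exact (hZ u hu).const_smul _

lemma integral_abs_mul_le_of_forall_norm_eq_one
    (hZ : ∀ u, ‖u‖ = 1 → MemLp (Z u) 2 P ∧ ∫ ω, Z u ω ^ 2 ∂P ≤ M) (a b : E) :
    ∫ ω, |Z a ω * Z b ω| ∂P ≤ M * (‖a‖ * ‖b‖) := by
  obtain ⟨u, hu, ha⟩ := Z.exists_norm_eq_one_apply_eq_norm_smul a
  obtain ⟨v, hv, hb⟩ := Z.exists_norm_eq_one_apply_eq_norm_smul b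
  obtain ⟨hu₂, huM⟩ := hZ u hu
  obtain ⟨hv₂, hvM⟩ := hZ v hv
  calc ∫ ω, |Z a ω * Z b ω| ∂P = ‖a‖ * ‖b‖ * ∫ ω, |Z u ω * Z v ω| ∂P := by
        simp only [ha, hb, Pi.smul_apply, smul_eq_mul, abs_mul, abs_norm, ← integral_const_mul]
        congr with ω
        ring
    _ ≤ ‖a‖ * ‖b‖ * ∫ ω, (Z u ω ^ 2 + Z v ω ^ 2) / 2 ∂P :=
        mul_le_mul_of_nonneg_left (integral_mono (hu₂.integrable_mul hv₂).abs
          ((hu₂.integrable_sq.add hv₂.integrable_sq).div_const 2)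
          fun ω => abs_mul_le_add_sq_div_two _ _) (by positivity)
    _ ≤ M * (‖a‖ * ‖b‖) := by
        rw [integral_div, integral_add hu₂.integrable_sq hv₂.integrable_sq]
        nlinarith [mul_nonneg (norm_nonneg a) (norm_nonneg b)]

variable [IsProbabilityMeasure P]

lemma memLp_two_and_integral_sq_le_of_memLp_four {f : Ω → ℝ} {C : ℝ} (hf : MemLp f 4 P)
    (hC : ∫ ω, f ω ^ 4 ∂P ≤ C) : MemLp f 2 P ∧ ∫ ω, f ω ^ 2 ∂P ≤ (1 + C) / 2 := by
  have hf₄ : Integrable (fun ω => f ω ^ 4) P := by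
    have h := (show MemLp f ((4 : ℕ) : ENNReal) P from hf).integrable_norm_pow'
    simpa only [Real.norm_eq_abs, Even.pow_abs ⟨2, rfl⟩] using h
  have hf₂ : MemLp f 2 P := hf.mono_exponent (by norm_num)
  refine ⟨hf₂, ?_⟩
  calc ∫ ω, f ω ^ 2 ∂P ≤ ∫ ω, (1 + f ω ^ 4) / 2 ∂P :=
        integral_mono hf₂.integrable_sq (((integrable_const 1).add hf₄).div_const 2) fun ω => by
          nlinarith [sq_nonneg (f ω ^ 2 - 1)]
    _ ≤ (1 + C) / 2 := by
        rw [integral_div, integral_add (integrable_const 1) hf₄]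
        simp only [integral_const, probReal_univ, smul_eq_mul, one_mul]
        linarith

lemma integral_abs_le_of_forall_norm_eq_one
    (hZ : ∀ u, ‖u‖ = 1 → MemLp (Z u) 2 P ∧ ∫ ω, Z u ω ^ 2 ∂P ≤ M) (a : E) :
    ∫ ω, |Z a ω| ∂P ≤ (1 + M) / 2 * ‖a‖ := by
  obtain ⟨u, hu, ha⟩ := Z.exists_norm_eq_one_apply_eq_norm_smul a
  obtain ⟨hu₂, huM⟩ := hZ u hu
  calc ∫ ω, |Z a ω| ∂P = ‖a‖ * ∫ ω, |Z u ω| ∂P := by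
        simp only [ha, Pi.smul_apply, smul_eq_mul, abs_mul, abs_norm, integral_const_mul]
    _ ≤ ‖a‖ * ∫ ω, (1 + Z u ω ^ 2) / 2 ∂P :=
        mul_le_mul_of_nonneg_left (integral_mono (hu₂.integrable one_le_two).abs
          (((integrable_const 1).add hu₂.integrable_sq).div_const 2)
          fun ω => abs_le_one_add_sq_div_two _) (norm_nonneg a)
    _ ≤ (1 + M) / 2 * ‖a‖ := by
        rw [integral_div, integral_add (integrable_const 1) hu₂.integrable_sq]
        simp only [integral_const, probReal_univ, smul_eq_mul, one_mul]
        nlinarith [norm_nonneg a]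

lemma abs_integral_neg_mul_sub_mul_mul_le
    (hZ : ∀ u, ‖u‖ = 1 → MemLp (Z u) 2 P ∧ ∫ ω, Z u ω ^ 2 ∂P ≤ M) {y d : Ω → ℝ}
    (hy : ∀ᵐ ω ∂P, |y ω| ≤ 1) (hd : ∀ ω, |d ω| ≤ 1) (a b c : E) :
    |∫ ω, (-y ω * Z a ω - d ω * Z b ω * Z c ω) ∂P| ≤ (1 + M) / 2 * ‖a‖ + M * (‖b‖ * ‖c‖) := by
  have hL₂ := memLp_two_of_forall_norm_eq_one fun u hu => (hZ u hu).1
  have ha : Integrable (fun ω => |Z a ω|) P := ((hL₂ a).integrable one_le_two).abs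
  have hbc : Integrable (fun ω => |Z b ω * Z c ω|) P := ((hL₂ b).integrable_mul (hL₂ c)).abs
  calc |∫ ω, (-y ω * Z a ω - d ω * Z b ω * Z c ω) ∂P|
      ≤ ∫ ω, |-y ω * Z a ω - d ω * Z b ω * Z c ω| ∂P := abs_integral_le_integral_abs
    _ ≤ ∫ ω, (|Z a ω| + |Z b ω * Z c ω|) ∂P := by
        refine integral_mono_of_nonneg (.of_forall fun _ => abs_nonneg _) (ha.add hbc) ?_
        filter_upwards [hy] with ω hyω
        exact abs_neg_mul_sub_mul_mul_le hyω (hd ω)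
    _ ≤ (1 + M) / 2 * ‖a‖ + M * (‖b‖ * ‖c‖) := by
        rw [integral_add ha hbc]
        exact add_le_add (integral_abs_le_of_forall_norm_eq_one hZ a)
          (integral_abs_mul_le_of_forall_norm_eq_one hZ b c)

end MomentBounds

def EuclideanSpace.cons {p : ℕ} (c : ℝ) (v : EuclideanSpace ℝ (Fin p)) :
    EuclideanSpace ℝ (Fin (p + 1)) :=
  WithLp.toLp 2 (Fin.cons c v)

namespace EuclideanSpace

variable {p : ℕ}

lemma norm_cons_sq (c : ℝ) (v : EuclideanSpace ℝ (Fin p)) :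
    ‖cons c v‖ ^ 2 = c ^ 2 + ‖v‖ ^ 2 := by
  simp [cons, EuclideanSpace.norm_sq_eq, Fin.sum_univ_succ]

lemma norm_cons_zero (v : EuclideanSpace ℝ (Fin p)) : ‖cons 0 v‖ = ‖v‖ := by
  rw [← pow_left_inj₀ (norm_nonneg _) (norm_nonneg _) two_ne_zero, norm_cons_sq]
  simp

lemma norm_cons_le (c : ℝ) (v : EuclideanSpace ℝ (Fin p)) : ‖cons c v‖ ≤ |c| + ‖v‖ := by
  nlinarith [norm_cons_sq c v, sq_abs c, abs_nonneg c, norm_nonneg v, norm_nonneg (cons c v)]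

end EuclideanSpace

open EuclideanSpace

noncomputable def regressorForm {Ω : Type*} {p : ℕ} (D : Ω → ℝ)
    (X : Ω → EuclideanSpace ℝ (Fin p)) : EuclideanSpace ℝ (Fin (p + 1)) →ₗ[ℝ] Ω → ℝ where
  toFun ξ ω := D ω * ξ 0 + ∑ l : Fin p, X ω l * ξ l.succ
  map_add' ξ η := by
    ext ω
    simp only [PiLp.add_apply, mul_add, Finset.sum_add_distrib, Pi.add_apply]
    ring
  map_smul' c ξ := by
    ext ω
    simp only [PiLp.smul_apply, smul_eq_mul, RingHom.id_apply, Pi.smul_apply, mul_add,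
      Finset.mul_sum]
    congr 1 <;> [ring; exact Finset.sum_congr rfl fun l _ => by ring]

lemma regressorForm_cons {Ω : Type*} {p : ℕ} (D : Ω → ℝ) (X : Ω → EuclideanSpace ℝ (Fin p))
    (c : ℝ) (v : EuclideanSpace ℝ (Fin p)) (ω : Ω) :
    regressorForm D X (cons c v) ω = D ω * c + ∑ l, X ω l * v l := rfl

theorem logit_score_gateaux_derivative_bound_general
    {Ω : Type*} [MeasurableSpace Ω] (P : Measure Ω) [IsProbabilityMeasure P]
    {p : ℕ} (Y D : Ω → ℝ) (X : Ω → EuclideanSpace ℝ (Fin p))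
    (β₀ γ₀ : EuclideanSpace ℝ (Fin p)) (C₁ : ℝ) (hC₁ : 1 ≤ C₁)
    (hYb : ∀ᵐ ω ∂P, 0 ≤ Y ω ∧ Y ω ≤ 1)
    (hmom : ∀ ξ : EuclideanSpace ℝ (Fin (p + 1)), ‖ξ‖ = 1 →
      MemLp (fun ω => D ω * ξ 0 + ∑ l : Fin p, X ω l * ξ l.succ) 4 P ∧
      ∫ ω, (D ω * ξ 0 + ∑ l : Fin p, X ω l * ξ l.succ) ^ 4 ∂P ≤ C₁)
    (hγ₀ : ‖γ₀‖ ≤ C₁) :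
    ∃ C : ℝ, 0 < C ∧ ∀ (θ : ℝ) (r : ℝ), r ∈ Set.Icc (0 : ℝ) 1 →
      ∀ β γ : EuclideanSpace ℝ (Fin p), ‖γ - γ₀‖ ≤ 1 →
      |∫ ω,
          (-(Y ω - logistic (D ω * θ + ∑ l, X ω l * (β₀ l + r * (β l - β₀ l)))) *
            (∑ l, X ω l * (γ l - γ₀ l))
          - logisticDeriv (D ω * θ + ∑ l, X ω l * (β₀ l + r * (β l - β₀ l))) *
            (D ω - ∑ l, X ω l * (γ₀ l + r * (γ l - γ₀ l))) *
            (∑ l, X ω l * (β l - β₀ l))) ∂P|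
        ≤ C * (‖β - β₀‖ + ‖γ - γ₀‖) := by
  set Z := regressorForm D X
  have hZ (u) (hu : ‖u‖ = 1) : MemLp (Z u) 2 P ∧ ∫ ω, Z u ω ^ 2 ∂P ≤ (1 + C₁) / 2 :=
    memLp_two_and_integral_sq_le_of_memLp_four (hmom u hu).1 (hmom u hu).2
  refine ⟨3 * C₁ ^ 2, by positivity, fun θ r ⟨hr₀, hr₁⟩ β γ hγ => ?_⟩
  set w := γ₀ + r • (γ - γ₀)
  have hw : ‖cons 1 (-w)‖ ≤ 2 + C₁ := by
    refine (norm_cons_le 1 (-w)).trans ?_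
    rw [abs_one, norm_neg]
    linarith [norm_add_smul_le hr₀ hr₁ γ₀ (γ - γ₀)]
  have hγZ (ω) : ∑ l, X ω l * (γ l - γ₀ l) = Z (cons 0 (γ - γ₀)) ω := by
    simp [Z, regressorForm_cons]
  have hwZ (ω) : D ω - ∑ l, X ω l * (γ₀ l + r * (γ l - γ₀ l)) = Z (cons 1 (-w)) ω := by
    simp only [Z, w, regressorForm_cons, PiLp.neg_apply, PiLp.add_apply, PiLp.smul_apply,
      smul_eq_mul, mul_neg, mul_one, Finset.sum_neg_distrib, sub_eq_add_neg]
  have hβZ (ω) : ∑ l, X ω l * (β l - β₀ l) = Z (cons 0 (β - β₀)) ω := by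
    simp [Z, regressorForm_cons]
  simp only [hγZ, hwZ, hβZ]
  refine (abs_integral_neg_mul_sub_mul_mul_le hZ
    (hYb.mono fun ω hω => abs_sub_logistic_le_one hω.1 hω.2 _)
    (fun _ => abs_logisticDeriv_le_one _) _ _ _).trans ?_
  rw [norm_cons_zero, norm_cons_zero]
  have hγ_coeff : (1 + (1 + C₁) / 2) / 2 ≤ 3 * C₁ ^ 2 := by nlinarith
  have hβ_coeff : (1 + C₁) / 2 * ‖cons 1 (-w)‖ ≤ 3 * C₁ ^ 2 := by nlinarith
  nlinarith [mul_le_mul_of_nonneg_right hγ_coeff (norm_nonneg (γ - γ₀)),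
    mul_le_mul_of_nonneg_right hβ_coeff (norm_nonneg (β - β₀))]

/-- Bound on the Gateaux derivative of the expected logistic score along the nuisance
path: |E[g_r]| ≤ C(‖β−β₀‖ + ‖γ−γ₀‖) with C depending only on C₁. -/
theorem logit_score_gateaux_derivative_bound
    {Ω : Type*} [MeasurableSpace Ω] (P : Measure Ω) [IsProbabilityMeasure P]
    {p : ℕ} (Y D : Ω → ℝ) (X : Ω → EuclideanSpace ℝ (Fin p))
    (hY : Measurable Y) (hD : Measurable D) (hX : Measurable X)
    (θ₀ : ℝ) (β₀ γ₀ : EuclideanSpace ℝ (Fin p)) (C₁ : ℝ) (hC₁ : 1 ≤ C₁)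
    (hYb : ∀ᵐ ω ∂P, 0 ≤ Y ω ∧ Y ω ≤ 1)
    (hmom : ∀ ξ : EuclideanSpace ℝ (Fin (p + 1)), ‖ξ‖ = 1 →
      MemLp (fun ω => D ω * ξ 0 + ∑ l : Fin p, X ω l * ξ l.succ) 4 P ∧
      ∫ ω, (D ω * ξ 0 + ∑ l : Fin p, X ω l * ξ l.succ) ^ 4 ∂P ≤ C₁)
    (hγ₀ : ‖γ₀‖ ≤ C₁) :
    ∃ C : ℝ, 0 < C ∧ ∀ (θ : ℝ) (r : ℝ), r ∈ Set.Icc (0 : ℝ) 1 →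
      ∀ β γ : EuclideanSpace ℝ (Fin p), ‖γ - γ₀‖ ≤ 1 →
      |∫ ω,
          (-(Y ω - logistic (D ω * θ + ∑ l, X ω l * (β₀ l + r * (β l - β₀ l)))) *
            (∑ l, X ω l * (γ l - γ₀ l))
          - logisticDeriv (D ω * θ + ∑ l, X ω l * (β₀ l + r * (β l - β₀ l))) *
            (D ω - ∑ l, X ω l * (γ₀ l + r * (γ l - γ₀ l))) *
            (∑ l, X ω l * (β l - β₀ l))) ∂P|
        ≤ C * (‖β - β₀‖ + ‖γ - γ₀‖) :=
  logit_score_gateaux_derivative_bound_general P Y D X β₀ γ₀ C₁ hC₁ hYb hmom hγ₀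
end
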